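/- arXiv:2604.06918 — 10 statements merged into one kernel-verified Lean document; each statement's English description precedes it below -/
import Mathlib

section
/- There exists a class K∞ function K₃ such that the following holds: for every X₀ ∈ ℝⁿ and all continuous functions u, p₂ : [0,D] → ℝ and p₁, p₃ : [0,D] → ℝⁿ satisfying, with the kernel K(x,y) := exp(∫₀^y c(x−z)/λ(p₃(z)) dz), the coupled integral equations p₁(x) = X₀ + ∫₀ˣ f(p₁(y), λ(p₃(y))·p₂(y)) / λ(p₃(y)) dy and p₂(x) = K(x,x)·u(x) + ∫₀ˣ (K(x,x)/K(x,y)) · g(x−y, p₂(y)) / λ(p₃(y)) dy for all x ∈ [0,D], the function w(x) := λ(p₃(x))·K(x,x)·u(x) − κ(p₁(x)) + λ(p₃(x)) · ∫₀ˣ (K(x,x)/K(x,y)) · g(x−y, p₂(y)) / λ(p₃(y)) dy satisfies sup_{x∈[0,D]} |w(x)| ≤ K₃( |X₀| + sup_{x∈[0,D]} |u(x)| ). -/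
open Set MeasureTheory

/-- A class `K∞` function: continuous, strictly increasing, unbounded on `[0,∞)` with `σ 0 = 0`. -/
def IsKInf (σ : ℝ → ℝ) : Prop :=
  ContinuousOn σ (Set.Ici 0) ∧ StrictMonoOn σ (Set.Ici 0) ∧ σ 0 = 0 ∧
  ∀ M : ℝ, ∃ s : ℝ, 0 ≤ s ∧ M < σ s

lemma kinf_mono {σ : ℝ → ℝ} (hσ : IsKInf σ) {a b : ℝ} (ha : 0 ≤ a) (hab : a ≤ b) :
    σ a ≤ σ b :=
  hσ.2.1.monotoneOn ha (le_trans ha hab) hab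

lemma kinf_nonneg {σ : ℝ → ℝ} (hσ : IsKInf σ) {a : ℝ} (ha : 0 ≤ a) : 0 ≤ σ a := by
  have := kinf_mono hσ le_rfl ha
  rw [hσ.2.2.1] at this
  exact this

lemma kinf_inv {σ : ℝ → ℝ} (hσ : IsKInf σ) :
    ∃ τ : ℝ → ℝ, Continuous τ ∧ Monotone τ ∧ τ 0 = 0 ∧
      ∀ t v : ℝ, 0 ≤ t → σ t ≤ v → t ≤ τ v := by
  set e : ℝ → ℝ := fun t => σ (max t 0) + min t 0 with he
  have hecont : Continuous e := by
    apply Continuous.add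
    · exact hσ.1.comp_continuous (continuous_id.max continuous_const)
        (fun t => Set.mem_Ici.2 (le_max_right _ _))
    · exact continuous_id.min continuous_const
  have hemono : StrictMono e := by
    intro a b hab
    rcases le_or_gt 0 a with ha | ha
    · have h1 : max a 0 = a := max_eq_left ha
      have h2 : max b 0 = b := max_eq_left (le_trans ha hab.le)
      have h3 : min a 0 = 0 := min_eq_right ha
      have h4 : min b 0 = 0 := min_eq_right (le_trans ha hab.le)
      simp only [he, h1, h2, h3, h4]
      exact add_lt_add_left (hσ.2.1 ha (le_trans ha hab.le) hab) 0
    · have h3 : min a 0 = a := min_eq_left ha.le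
      have h5 : σ (max a 0) ≤ σ (max b 0) :=
        kinf_mono hσ (le_max_right _ _) (max_le_max hab.le le_rfl)
      have h6 : a < min b 0 := lt_min hab ha
      simp only [he, h3]
      exact add_lt_add_of_le_of_lt h5 h6
  have hetop : Filter.Tendsto e Filter.atTop Filter.atTop := by
    rw [Filter.tendsto_atTop]
    intro M
    obtain ⟨s, hs0, hMs⟩ := hσ.2.2.2 M
    filter_upwards [Filter.eventually_ge_atTop (max s 0)] with t ht
    have ht0 : (0:ℝ) ≤ t := le_trans (le_max_right _ _) ht
    have hst : s ≤ t := le_trans (le_max_left _ _) ht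
    have : σ s ≤ σ t := kinf_mono hσ hs0 hst
    have het : e t = σ t := by
      simp [he, max_eq_left ht0, min_eq_right ht0]
    rw [het]
    linarith
  have hebot : Filter.Tendsto e Filter.atBot Filter.atBot := by
    rw [Filter.tendsto_atBot]
    intro M
    filter_upwards [Filter.eventually_le_atBot (min M 0)] with t ht
    have ht0 : t ≤ 0 := le_trans ht (min_le_right _ _)
    have het : e t = t := by
      simp [he, max_eq_right ht0, min_eq_left ht0, hσ.2.2.1]
    rw [het]
    exact le_trans ht (min_le_left _ _)
  have hesurj : Function.Surjective e := hecont.surjective hetop hebot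
  set E := StrictMono.orderIsoOfSurjective e hemono hesurj with hE
  refine ⟨fun v => E.symm v, ?_, fun a b hab => E.symm.monotone hab, ?_, ?_⟩
  · exact E.symm.continuous
  · have h0 : e 0 = 0 := by simp [he, hσ.2.2.1]
    have : E.symm (e 0) = 0 := StrictMono.orderIsoOfSurjective_symm_apply_self e hemono hesurj 0
    rwa [h0] at this
  · intro t v ht hv
    have h1 : e t = σ t := by simp [he, max_eq_left ht, min_eq_right ht]
    have h2 : E.symm (e t) = t := StrictMono.orderIsoOfSurjective_symm_apply_self e hemono hesurj t
    calc t = E.symm (e t) := h2.symm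
      _ ≤ E.symm v := E.symm.monotone (by rw [h1]; exact hv)

lemma gron_aux {B A t T : ℝ} (hB : 0 ≤ B) (hA : 0 ≤ A) (ht : 0 ≤ t) (htT : t ≤ T) :
    A + B * gronwallBound 0 B A t ≤ A * Real.exp (B * T) := by
  by_cases hB0 : B = 0
  · subst hB0
    simp only [gronwallBound_K0, zero_mul, Real.exp_zero]
    nlinarith
  · rw [gronwallBound_of_K_ne_0 hB0]
    have h1 : A + B * (0 * Real.exp (B * t) + A / B * (Real.exp (B * t) - 1))
        = A * Real.exp (B * t) := by
      field_simp
      ring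
    rw [h1]
    have h2 : Real.exp (B * t) ≤ Real.exp (B * T) :=
      Real.exp_le_exp.2 (mul_le_mul_of_nonneg_left htT hB)
    exact mul_le_mul_of_nonneg_left h2 hA

lemma gron_aux2 {δ c ε t T : ℝ} (hε : 0 < ε) (hδ : 0 ≤ δ) (hc : 0 ≤ c) (ht : t ≤ T) :
    gronwallBound δ ε⁻¹ (ε⁻¹ * c) t ≤ Real.exp (ε⁻¹ * T) * (δ + c) := by
  have hεne : ε⁻¹ ≠ 0 := inv_ne_zero hε.ne'
  rw [gronwallBound_of_K_ne_0 hεne]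
  have h1 : ε⁻¹ * c / ε⁻¹ = c := by field_simp
  rw [h1]
  have h2 : Real.exp (ε⁻¹ * t) ≤ Real.exp (ε⁻¹ * T) :=
    Real.exp_le_exp.2 (mul_le_mul_of_nonneg_left ht (inv_nonneg.2 hε.le))
  have h3 := Real.exp_pos (ε⁻¹ * t)
  have h4 := Real.exp_pos (ε⁻¹ * T)
  show δ * Real.exp (ε⁻¹ * t) + c * (Real.exp (ε⁻¹ * t) - 1) ≤ Real.exp (ε⁻¹ * T) * (δ + c)
  nlinarith [mul_le_mul_of_nonneg_left h2 hδ, mul_le_mul_of_nonneg_left h2 hc]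

set_option maxHeartbeats 2000000 in
/-- Norm-equivalence lemma: the backstepping transform `w` is bounded in sup norm by a
class `K∞` function of `|X₀|` plus the sup norm of `u`. -/
theorem stmt0
    (n : ℕ) (D : ℝ) (hD : 0 < D)
    (ε lambar Lg : ℝ) (hε : 0 < ε) (hεlam : ε ≤ lambar) (hLg : 0 ≤ Lg)
    (lam : EuclideanSpace ℝ (Fin n) → ℝ) (hlamc : Continuous lam)
    (hlam : ∀ Z, ε ≤ lam Z ∧ lam Z ≤ lambar)
    (f : EuclideanSpace ℝ (Fin n) → ℝ → EuclideanSpace ℝ (Fin n))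
    (hf : Continuous fun q : EuclideanSpace ℝ (Fin n) × ℝ => f q.1 q.2)
    (g : ℝ → ℝ → ℝ)
    (hg : Continuous fun q : ℝ × ℝ => g q.1 q.2)
    (hg0 : ∀ x ∈ Icc (0:ℝ) D, g x 0 = 0)
    (hgLip : ∀ x ∈ Icc (0:ℝ) D, ∀ v₁ v₂ : ℝ, |g x v₁ - g x v₂| ≤ Lg * |v₁ - v₂|)
    (κ : EuclideanSpace ℝ (Fin n) → ℝ) (hκ : Continuous κ)
    (ρ : ℝ → ℝ) (hρ : IsKInf ρ) (hκρ : ∀ ξ, |κ ξ| ≤ ρ ‖ξ‖)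
    (c : ℝ → ℝ) (hc : ContinuousOn c (Icc (0:ℝ) D))
    (Θ : EuclideanSpace ℝ (Fin n) → ℝ) (hΘ : ContDiff ℝ 1 Θ)
    (hΘ0 : ∀ X, 0 ≤ Θ X)
    (G₁ G₂ G₃ : ℝ → ℝ) (hG₁ : IsKInf G₁) (hG₂ : IsKInf G₂) (hG₃ : IsKInf G₃)
    (hΘbd : ∀ X, G₁ ‖X‖ ≤ Θ X ∧ Θ X ≤ G₂ ‖X‖)
    (hΘf : ∀ (X : EuclideanSpace ℝ (Fin n)) (w : ℝ),
      fderiv ℝ Θ X (f X w) ≤ Θ X + G₃ |w|) :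
    ∃ K₃ : ℝ → ℝ, IsKInf K₃ ∧
      ∀ (X₀ : EuclideanSpace ℝ (Fin n)) (u p₂ : ℝ → ℝ)
        (p₁ p₃ : ℝ → EuclideanSpace ℝ (Fin n)),
        ContinuousOn u (Icc (0:ℝ) D) → ContinuousOn p₂ (Icc (0:ℝ) D) →
        ContinuousOn p₁ (Icc (0:ℝ) D) → ContinuousOn p₃ (Icc (0:ℝ) D) →
        (∀ x ∈ Icc (0:ℝ) D,
          p₁ x = X₀ + ∫ y in (0:ℝ)..x,
            (lam (p₃ y))⁻¹ • f (p₁ y) (lam (p₃ y) * p₂ y)) →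
        (∀ x ∈ Icc (0:ℝ) D,
          p₂ x = Real.exp (∫ z in (0:ℝ)..x, c (x - z) / lam (p₃ z)) * u x +
            ∫ y in (0:ℝ)..x,
              (Real.exp (∫ z in (0:ℝ)..x, c (x - z) / lam (p₃ z)) /
                Real.exp (∫ z in (0:ℝ)..y, c (x - z) / lam (p₃ z))) *
                g (x - y) (p₂ y) / lam (p₃ y)) →
        (⨆ x : Icc (0:ℝ) D,
          |lam (p₃ x) * Real.exp (∫ z in (0:ℝ)..(x:ℝ), c ((x:ℝ) - z) / lam (p₃ z)) * u x
            - κ (p₁ x)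
            + lam (p₃ x) * ∫ y in (0:ℝ)..(x:ℝ),
                (Real.exp (∫ z in (0:ℝ)..(x:ℝ), c ((x:ℝ) - z) / lam (p₃ z)) /
                  Real.exp (∫ z in (0:ℝ)..y, c ((x:ℝ) - z) / lam (p₃ z))) *
                  g ((x:ℝ) - y) (p₂ y) / lam (p₃ y)|)
        ≤ K₃ (‖X₀‖ + ⨆ x : Icc (0:ℝ) D, |u x|) := by
  classical
  -- bound on c
  obtain ⟨Mc₀, hMc₀⟩ := isCompact_Icc.exists_bound_of_continuousOn hc
  set Mc := max Mc₀ 0 with hMcdef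
  have hMc0 : (0:ℝ) ≤ Mc := le_max_right _ _
  have hMc : ∀ x ∈ Icc (0:ℝ) D, |c x| ≤ Mc := fun x hx =>
    le_trans (hMc₀ x hx) (le_max_left _ _)
  -- constants
  set Ke := Real.exp (2 * (Mc * D / ε)) with hKedef
  have hKe1 : (1:ℝ) ≤ Ke := by
    rw [hKedef]
    apply Real.one_le_exp
    positivity
  have hKe0 : (0:ℝ) < Ke := lt_of_lt_of_le one_pos hKe1
  set B := Ke * Lg / ε with hBdef
  have hB0 : (0:ℝ) ≤ B := by positivity
  set C₁ := Ke * Real.exp (B * D) with hC₁def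
  have hC₁0 : (0:ℝ) < C₁ := by positivity
  set CC := lambar * C₁ with hCCdef
  have hlambar0 : (0:ℝ) < lambar := lt_of_lt_of_le hε hεlam
  have hCC0 : (0:ℝ) < CC := mul_pos hlambar0 hC₁0
  -- inverse of G₁
  obtain ⟨τ, hτc, hτm, hτ0, hτkey⟩ := kinf_inv hG₁
  set Φ : ℝ → ℝ := fun s => Real.exp (ε⁻¹ * D) * (G₂ s + G₃ (CC * s)) with hΦdef
  have hΦ0 : ∀ s, 0 ≤ s → 0 ≤ Φ s := by
    intro s hs
    have := kinf_nonneg hG₂ hs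
    have := kinf_nonneg hG₃ (mul_nonneg hCC0.le hs)
    positivity
  have hΦmono : ∀ a b : ℝ, 0 ≤ a → a ≤ b → Φ a ≤ Φ b := by
    intro a b ha hab
    apply mul_le_mul_of_nonneg_left _ (Real.exp_pos _).le
    have h1 : G₂ a ≤ G₂ b := kinf_mono hG₂ ha hab
    have h2 : G₃ (CC * a) ≤ G₃ (CC * b) :=
      kinf_mono hG₃ (mul_nonneg hCC0.le ha) (mul_le_mul_of_nonneg_left hab hCC0.le)
    linarith
  have hτΦ0 : ∀ s, 0 ≤ s → 0 ≤ τ (Φ s) := by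
    intro s hs
    have : τ 0 ≤ τ (Φ s) := hτm (hΦ0 s hs)
    rwa [hτ0] at this
  refine ⟨fun s => CC * s + ρ (τ (Φ s)), ⟨?_, ?_, ?_, ?_⟩, ?_⟩
  · -- continuity
    apply ContinuousOn.add (continuous_const.mul continuous_id).continuousOn
    apply hρ.1.comp
    · apply (hτc.comp_continuousOn)
      apply ContinuousOn.mul continuousOn_const
      apply ContinuousOn.add hG₂.1
      exact hG₃.1.comp (continuous_const.mul continuous_id).continuousOn
        (fun s hs => mul_nonneg hCC0.le hs)
    · intro s hs
      exact hτΦ0 s hs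
  · -- strict mono
    intro a ha b hb hab
    have h1 : CC * a < CC * b := mul_lt_mul_of_pos_left hab hCC0
    have h2 : ρ (τ (Φ a)) ≤ ρ (τ (Φ b)) :=
      kinf_mono hρ (hτΦ0 a ha) (hτm (hΦmono a b ha hab.le))
    exact add_lt_add_of_lt_of_le h1 h2
  · -- zero at zero
    have h1 : Φ 0 = 0 := by
      simp [hΦdef, hG₂.2.2.1, hG₃.2.2.1]
    simp [h1, hτ0, hρ.2.2.1]
  · -- unbounded
    intro M
    refine ⟨max 0 ((M + 1) / CC), le_max_left _ _, ?_⟩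
    have h1 : CC * ((M + 1) / CC) = M + 1 := by field_simp
    have h2 : CC * ((M + 1) / CC) ≤ CC * max 0 ((M + 1) / CC) :=
      mul_le_mul_of_nonneg_left (le_max_right _ _) hCC0.le
    have h3 : 0 ≤ ρ (τ (Φ (max 0 ((M + 1) / CC)))) :=
      kinf_nonneg hρ (hτΦ0 _ (le_max_left _ _))
    rw [h1] at h2
    linarith
  · intro X₀ u p₂ p₁ p₃ hu hp₂ hp₁ hp₃ heq1 heq2
    have hsub : ∀ x ∈ Icc (0:ℝ) D, Icc (0:ℝ) x ⊆ Icc (0:ℝ) D :=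
      fun x hx => Icc_subset_Icc le_rfl hx.2
    have hlamε : ∀ y, ε ≤ lam (p₃ y) := fun y => (hlam _).1
    have hlamb : ∀ y, lam (p₃ y) ≤ lambar := fun y => (hlam _).2
    have hlampos : ∀ y, 0 < lam (p₃ y) := fun y => lt_of_lt_of_le hε (hlamε y)
    haveI hne : Nonempty (Icc (0:ℝ) D) := ⟨⟨0, le_rfl, hD.le⟩⟩
    set U := ⨆ x : Icc (0:ℝ) D, |u x| with hUdef
    have hbddU : BddAbove (range fun x : Icc (0:ℝ) D => |u x|) := by
      have hbd := (isCompact_Icc.image_of_continuousOn hu.abs).bddAbove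
      have he : (fun t => |u t|) '' Icc (0:ℝ) D = range (fun x : Icc (0:ℝ) D => |u x|) :=
        Set.image_eq_range _ _
      rwa [he] at hbd
    have hUle : ∀ x ∈ Icc (0:ℝ) D, |u x| ≤ U := fun x hx => le_ciSup hbddU ⟨x, hx⟩
    have hU0 : 0 ≤ U := le_trans (abs_nonneg _) (hUle 0 ⟨le_rfl, hD.le⟩)
    -- continuity / bounds for the kernel exponent
    have hIintg : ∀ x ∈ Icc (0:ℝ) D,
        ContinuousOn (fun z => c (x - z) / lam (p₃ z)) (Icc 0 x) := by
      intro x hx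
      apply ContinuousOn.div
      · apply hc.comp (continuous_const.sub continuous_id).continuousOn
        intro z hz
        have h1 := hz.1; have h2 := hz.2; have h3 := hx.2
        exact Set.mem_Icc.2 ⟨by simp only [Pi.sub_apply, id_eq]; linarith, by simp only [Pi.sub_apply, id_eq]; linarith⟩
      · exact hlamc.comp_continuousOn (hp₃.mono (hsub x hx))
      · exact fun z _ => (hlampos z).ne'
    have hIcont : ∀ x ∈ Icc (0:ℝ) D,
        ContinuousOn (fun y => ∫ z in (0:ℝ)..y, c (x - z) / lam (p₃ z)) (Icc 0 x) := by
      intro x hx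
      have h1 : IntegrableOn (fun z => c (x - z) / lam (p₃ z)) (uIcc (0:ℝ) x) := by
        rw [uIcc_of_le hx.1]
        exact (hIintg x hx).integrableOn_Icc
      have h2 := intervalIntegral.continuousOn_primitive_interval h1
      rwa [uIcc_of_le hx.1] at h2
    have hIbd : ∀ x ∈ Icc (0:ℝ) D, ∀ y ∈ Icc (0:ℝ) x,
        |∫ z in (0:ℝ)..y, c (x - z) / lam (p₃ z)| ≤ Mc * D / ε := by
      intro x hx y hy
      have h1 : ∀ z ∈ Set.uIoc (0:ℝ) y, ‖c (x - z) / lam (p₃ z)‖ ≤ Mc / ε := by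
        intro z hz
        rw [uIoc_of_le hy.1] at hz
        have hz1 := hz.1; have hz2 := hz.2
        have hxz : x - z ∈ Icc (0:ℝ) D :=
          Set.mem_Icc.2 ⟨by linarith [hy.2], by linarith [hx.2]⟩
        rw [Real.norm_eq_abs, abs_div, abs_of_pos (hlampos z)]
        exact div_le_div₀ hMc0 (hMc _ hxz) hε (hlamε z)
      have h2 := intervalIntegral.norm_integral_le_of_norm_le_const h1
      rw [Real.norm_eq_abs] at h2
      calc |∫ z in (0:ℝ)..y, c (x - z) / lam (p₃ z)| ≤ Mc / ε * |y - 0| := h2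
        _ = Mc / ε * y := by rw [sub_zero, abs_of_nonneg hy.1]
        _ ≤ Mc / ε * D := mul_le_mul_of_nonneg_left (le_trans hy.2 hx.2) (by positivity)
        _ = Mc * D / ε := by ring
    have hExpxx : ∀ x ∈ Icc (0:ℝ) D,
        Real.exp (∫ z in (0:ℝ)..x, c (x - z) / lam (p₃ z)) ≤ Ke := by
      intro x hx
      rw [hKedef]
      apply Real.exp_le_exp.2
      obtain ⟨h1a, h1b⟩ := abs_le.1 (hIbd x hx x (Set.mem_Icc.2 ⟨hx.1, le_rfl⟩))
      have h2 : 0 ≤ Mc * D / ε := by positivity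
      linarith
    have hExp : ∀ x ∈ Icc (0:ℝ) D, ∀ y ∈ Icc (0:ℝ) x,
        Real.exp (∫ z in (0:ℝ)..x, c (x - z) / lam (p₃ z)) /
          Real.exp (∫ z in (0:ℝ)..y, c (x - z) / lam (p₃ z)) ≤ Ke := by
      intro x hx y hy
      rw [← Real.exp_sub, hKedef]
      apply Real.exp_le_exp.2
      obtain ⟨h1a, h1b⟩ := abs_le.1 (hIbd x hx x (Set.mem_Icc.2 ⟨hx.1, le_rfl⟩))
      obtain ⟨h2a, h2b⟩ := abs_le.1 (hIbd x hx y hy)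
      linarith
    -- continuity of the integrand in the p₂-equation
    have hJcont : ∀ x ∈ Icc (0:ℝ) D, ContinuousOn (fun y =>
        (Real.exp (∫ z in (0:ℝ)..x, c (x - z) / lam (p₃ z)) /
          Real.exp (∫ z in (0:ℝ)..y, c (x - z) / lam (p₃ z))) *
          g (x - y) (p₂ y) / lam (p₃ y)) (Icc 0 x) := by
      intro x hx
      apply ContinuousOn.div
      · apply ContinuousOn.mul
        · apply ContinuousOn.div continuousOn_const
          · exact Real.continuous_exp.comp_continuousOn (hIcont x hx)
          · exact fun y _ => (Real.exp_pos _).ne'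
        · exact hg.comp_continuousOn
            (ContinuousOn.prodMk ((continuous_const.sub continuous_id).continuousOn) (hp₂.mono (hsub x hx)))
      · exact hlamc.comp_continuousOn (hp₃.mono (hsub x hx))
      · exact fun y _ => (hlampos y).ne'
    have hJbd : ∀ x ∈ Icc (0:ℝ) D, ∀ y ∈ Icc (0:ℝ) x,
        |(Real.exp (∫ z in (0:ℝ)..x, c (x - z) / lam (p₃ z)) /
          Real.exp (∫ z in (0:ℝ)..y, c (x - z) / lam (p₃ z))) *
          g (x - y) (p₂ y) / lam (p₃ y)| ≤ Ke * Lg / ε * |p₂ y| := by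
      intro x hx y hy
      have hxy : x - y ∈ Icc (0:ℝ) D :=
        Set.mem_Icc.2 ⟨by linarith [hy.2], by linarith [hy.1, hx.2]⟩
      have hgb : |g (x - y) (p₂ y)| ≤ Lg * |p₂ y| := by
        have h1 := hgLip (x - y) hxy (p₂ y) 0
        rwa [hg0 _ hxy, sub_zero, sub_zero] at h1
      have hE0 : 0 < Real.exp (∫ z in (0:ℝ)..x, c (x - z) / lam (p₃ z)) /
          Real.exp (∫ z in (0:ℝ)..y, c (x - z) / lam (p₃ z)) :=
        div_pos (Real.exp_pos _) (Real.exp_pos _)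
      rw [abs_div, abs_mul, abs_of_pos (hlampos y), abs_of_pos hE0]
      calc _ ≤ Ke * (Lg * |p₂ y|) / ε := by
            apply div_le_div₀ (by positivity) _ hε (hlamε y)
            exact mul_le_mul (hExp x hx y hy) hgb (abs_nonneg _) hKe0.le
        _ = Ke * Lg / ε * |p₂ y| := by ring
    -- pointwise Volterra inequality for p₂
    have hp₂key : ∀ x ∈ Icc (0:ℝ) D,
        |p₂ x| ≤ Ke * U + B * ∫ y in (0:ℝ)..x, |p₂ y| := by
      intro x hx
      rw [heq2 x hx]
      have hint1 : IntervalIntegrable (fun y =>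
          ‖(Real.exp (∫ z in (0:ℝ)..x, c (x - z) / lam (p₃ z)) /
            Real.exp (∫ z in (0:ℝ)..y, c (x - z) / lam (p₃ z))) *
            g (x - y) (p₂ y) / lam (p₃ y)‖) volume 0 x := by
        apply ContinuousOn.intervalIntegrable
        rw [uIcc_of_le hx.1]
        exact (hJcont x hx).norm
      have hint2 : IntervalIntegrable (fun y => Ke * Lg / ε * |p₂ y|) volume 0 x := by
        apply ContinuousOn.intervalIntegrable
        rw [uIcc_of_le hx.1]
        exact continuousOn_const.mul ((hp₂.mono (hsub x hx)).abs)
      have h1 : |Real.exp (∫ z in (0:ℝ)..x, c (x - z) / lam (p₃ z)) * u x| ≤ Ke * U := by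
        rw [abs_mul, abs_of_pos (Real.exp_pos _)]
        exact mul_le_mul (hExpxx x hx) (hUle x hx) (abs_nonneg _) hKe0.le
      have h2 : |∫ y in (0:ℝ)..x,
          (Real.exp (∫ z in (0:ℝ)..x, c (x - z) / lam (p₃ z)) /
            Real.exp (∫ z in (0:ℝ)..y, c (x - z) / lam (p₃ z))) *
            g (x - y) (p₂ y) / lam (p₃ y)|
          ≤ B * ∫ y in (0:ℝ)..x, |p₂ y| := by
        have h3 := intervalIntegral.norm_integral_le_integral_norm (μ := volume)
          (f := fun y => (Real.exp (∫ z in (0:ℝ)..x, c (x - z) / lam (p₃ z)) /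
            Real.exp (∫ z in (0:ℝ)..y, c (x - z) / lam (p₃ z))) *
            g (x - y) (p₂ y) / lam (p₃ y)) hx.1
        have h4 : (∫ y in (0:ℝ)..x,
            ‖(Real.exp (∫ z in (0:ℝ)..x, c (x - z) / lam (p₃ z)) /
              Real.exp (∫ z in (0:ℝ)..y, c (x - z) / lam (p₃ z))) *
              g (x - y) (p₂ y) / lam (p₃ y)‖)
            ≤ ∫ y in (0:ℝ)..x, Ke * Lg / ε * |p₂ y| := by
          apply intervalIntegral.integral_mono_on hx.1 hint1 hint2
          intro y hy
          rw [Real.norm_eq_abs]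
          exact hJbd x hx y hy
        have h5 : (∫ y in (0:ℝ)..x, Ke * Lg / ε * |p₂ y|)
            = B * ∫ y in (0:ℝ)..x, |p₂ y| := by
          rw [intervalIntegral.integral_const_mul, hBdef]
        rw [Real.norm_eq_abs] at h3
        rw [← h5]
        exact le_trans h3 h4
      calc |Real.exp (∫ z in (0:ℝ)..x, c (x - z) / lam (p₃ z)) * u x +
            ∫ y in (0:ℝ)..x,
              (Real.exp (∫ z in (0:ℝ)..x, c (x - z) / lam (p₃ z)) /
                Real.exp (∫ z in (0:ℝ)..y, c (x - z) / lam (p₃ z))) *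
                g (x - y) (p₂ y) / lam (p₃ y)| ≤ _ + _ := abs_add_le _ _
        _ ≤ Ke * U + B * ∫ y in (0:ℝ)..x, |p₂ y| := add_le_add h1 h2
    -- clamp function
    set φc : ℝ → ℝ := fun y => max 0 (min y D) with hφcdef
    have hφcont : Continuous φc := continuous_const.max (continuous_id.min continuous_const)
    have hφmem : ∀ y, φc y ∈ Icc (0:ℝ) D :=
      fun y => ⟨le_max_left _ _, max_le hD.le (min_le_right _ _)⟩
    have hφeq : ∀ y ∈ Icc (0:ℝ) D, φc y = y := by
      intro y hy
      rw [hφcdef]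
      simp only
      rw [min_eq_left hy.2, max_eq_right hy.1]
    -- Gronwall for p₂
    set q : ℝ → ℝ := fun y => |p₂ (φc y)| with hqdef
    have hqc : Continuous q := (hp₂.comp_continuous hφcont hφmem).abs
    have hq0 : ∀ y, 0 ≤ q y := fun y => abs_nonneg _
    set F : ℝ → ℝ := fun x => ∫ y in (0:ℝ)..x, q y with hFdef
    have hF' : ∀ x, HasDerivAt F (q x) x := fun x => (hqc.integral_hasStrictDerivAt 0 x).hasDerivAt
    have hFc : Continuous F := continuous_iff_continuousAt.2 fun x => (hF' x).continuousAt
    have hFeq : ∀ x ∈ Icc (0:ℝ) D, F x = ∫ y in (0:ℝ)..x, |p₂ y| := by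
      intro x hx
      apply intervalIntegral.integral_congr
      intro y hy
      rw [uIcc_of_le hx.1] at hy
      rw [hqdef]
      simp only
      rw [hφeq y (hsub x hx hy)]
    have hF0 : ∀ x ∈ Icc (0:ℝ) D, 0 ≤ F x := fun x hx =>
      intervalIntegral.integral_nonneg hx.1 (fun y _ => hq0 y)
    have hgron : ∀ x ∈ Icc (0:ℝ) D, ‖F x‖ ≤ gronwallBound 0 B (Ke * U) (x - 0) := by
      apply norm_le_gronwallBound_of_norm_deriv_right_le hFc.continuousOn
        (fun x _ => (hF' x).hasDerivWithinAt)
      · simp [hFdef]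
      · intro x hx
        have hx' : x ∈ Icc (0:ℝ) D := Ico_subset_Icc_self hx
        rw [Real.norm_eq_abs, abs_of_nonneg (hq0 x), Real.norm_eq_abs,
          abs_of_nonneg (hF0 x hx')]
        have h5 : q x = |p₂ x| := by
          rw [hqdef]; simp only; rw [hφeq x hx']
        rw [h5, hFeq x hx']
        have h6 := hp₂key x hx'
        linarith
    have hp₂bd : ∀ x ∈ Icc (0:ℝ) D, |p₂ x| ≤ C₁ * U := by
      intro x hx
      have h1 := hgron x hx
      rw [Real.norm_eq_abs, abs_of_nonneg (hF0 x hx), sub_zero] at h1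
      have h2 : |p₂ x| ≤ Ke * U + B * F x := by
        have h3 := hp₂key x hx
        rw [hFeq x hx]
        linarith
      have h4 := gron_aux (A := Ke * U) (t := x) (T := D) hB0 (by positivity) hx.1 hx.2
      have h5 : B * F x ≤ B * gronwallBound 0 B (Ke * U) x := mul_le_mul_of_nonneg_left h1 hB0
      have h6 : Ke * U * Real.exp (B * D) = C₁ * U := by rw [hC₁def]; ring
      linarith
    -- set-up for p₁ / Θ estimate
    set v : ℝ → EuclideanSpace ℝ (Fin n) :=
      fun y => (lam (p₃ y))⁻¹ • f (p₁ y) (lam (p₃ y) * p₂ y) with hvdef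
    have hvcont : ContinuousOn v (Icc (0:ℝ) D) := by
      refine ContinuousOn.smul (f := fun y => (lam (p₃ y))⁻¹)
        (g := fun y => f (p₁ y) (lam (p₃ y) * p₂ y)) ?_ ?_
      · exact (hlamc.comp_continuousOn hp₃).inv₀ (fun y _ => (hlampos y).ne')
      · exact hf.comp_continuousOn (hp₁.prodMk ((hlamc.comp_continuousOn hp₃).mul hp₂))
    set vt : ℝ → EuclideanSpace ℝ (Fin n) := fun y => v (φc y) with hvtdef
    have hvtc : Continuous vt := hvcont.comp_continuous hφcont hφmem
    set P : ℝ → EuclideanSpace ℝ (Fin n) := fun x => X₀ + ∫ y in (0:ℝ)..x, vt y with hPdef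
    have hP' : ∀ x, HasDerivAt P (vt x) x := fun x =>
      ((hvtc.integral_hasStrictDerivAt 0 x).hasDerivAt).const_add X₀
    have hPp₁ : ∀ x ∈ Icc (0:ℝ) D, P x = p₁ x := by
      intro x hx
      rw [hPdef]
      simp only
      rw [heq1 x hx]
      congr 1
      apply intervalIntegral.integral_congr
      intro y hy
      rw [uIcc_of_le hx.1] at hy
      rw [hvtdef]
      simp only
      rw [hφeq y (hsub x hx hy)]
    have hΘdiff : ∀ X, HasFDerivAt Θ (fderiv ℝ Θ X) X := fun X =>
      (hΘ.differentiable one_ne_zero X).hasFDerivAt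
    have hh' : ∀ x, HasDerivAt (fun z => Θ (P z)) (fderiv ℝ Θ (P x) (vt x)) x := fun x =>
      (hΘdiff (P x)).comp_hasDerivAt x (hP' x)
    have hhc : Continuous fun z => Θ (P z) :=
      continuous_iff_continuousAt.2 fun x => (hh' x).continuousAt
    have hG3b0 : 0 ≤ G₃ (lambar * (C₁ * U)) := kinf_nonneg hG₃ (by positivity)
    have hbound : ∀ x ∈ Ico (0:ℝ) D,
        fderiv ℝ Θ (P x) (vt x) ≤ ε⁻¹ * Θ (P x) + ε⁻¹ * G₃ (lambar * (C₁ * U)) := by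
      intro x hx
      have hx' : x ∈ Icc (0:ℝ) D := Ico_subset_Icc_self hx
      have h1 : vt x = v x := by
        rw [hvtdef]; simp only; rw [hφeq x hx']
      rw [h1]
      simp only [hvdef, ContinuousLinearMap.map_smul, smul_eq_mul]
      rw [hPp₁ x hx']
      have h2 := hΘf (p₁ x) (lam (p₃ x) * p₂ x)
      have h3 : G₃ |lam (p₃ x) * p₂ x| ≤ G₃ (lambar * (C₁ * U)) := by
        apply kinf_mono hG₃ (abs_nonneg _)
        rw [abs_mul, abs_of_pos (hlampos x)]
        exact mul_le_mul (hlamb x) (hp₂bd x hx') (abs_nonneg _) hlambar0.le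
      have h4 : 0 ≤ Θ (p₁ x) + G₃ (lambar * (C₁ * U)) := add_nonneg (hΘ0 _) hG3b0
      have h5 : (lam (p₃ x))⁻¹ ≤ ε⁻¹ := inv_anti₀ hε (hlamε x)
      have h6 : (lam (p₃ x))⁻¹ * fderiv ℝ Θ (p₁ x) (f (p₁ x) (lam (p₃ x) * p₂ x))
          ≤ (lam (p₃ x))⁻¹ * (Θ (p₁ x) + G₃ (lambar * (C₁ * U))) :=
        mul_le_mul_of_nonneg_left (by linarith) (inv_nonneg.2 (hlampos x).le)
      have h7 : (lam (p₃ x))⁻¹ * (Θ (p₁ x) + G₃ (lambar * (C₁ * U)))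
          ≤ ε⁻¹ * (Θ (p₁ x) + G₃ (lambar * (C₁ * U))) := mul_le_mul_of_nonneg_right h5 h4
      have h8 : ε⁻¹ * (Θ (p₁ x) + G₃ (lambar * (C₁ * U)))
          = ε⁻¹ * Θ (p₁ x) + ε⁻¹ * G₃ (lambar * (C₁ * U)) := mul_add _ _ _
      linarith
    have hGron2 : ∀ x ∈ Icc (0:ℝ) D, Θ (P x) ≤
        gronwallBound (G₂ ‖X₀‖) ε⁻¹ (ε⁻¹ * G₃ (lambar * (C₁ * U))) (x - 0) := by
      apply le_gronwallBound_of_liminf_deriv_right_le hhc.continuousOn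
      · intro x _ r hr
        have h1 := ((hh' x).hasDerivWithinAt (s := Ici x)).liminf_right_slope_le hr
        apply h1.mono
        intro z hz
        rwa [slope_def_field, div_eq_inv_mul] at hz
      · have h1 : P 0 = X₀ := by
          rw [hPdef]; simp
        rw [h1]
        exact (hΘbd X₀).2
      · exact hbound
    set s := ‖X₀‖ + U with hsdef
    have hΘbd2 : ∀ x ∈ Icc (0:ℝ) D, Θ (p₁ x) ≤ Φ s := by
      intro x hx
      have h1 := hGron2 x hx
      rw [sub_zero, hPp₁ x hx] at h1
      have h2 := gron_aux2 (δ := G₂ ‖X₀‖) (c := G₃ (lambar * (C₁ * U))) (T := D) hε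
        (kinf_nonneg hG₂ (norm_nonneg _)) hG3b0 hx.2
      have h3 : G₂ ‖X₀‖ ≤ G₂ s := kinf_mono hG₂ (norm_nonneg _) (by rw [hsdef]; linarith)
      have h4 : G₃ (lambar * (C₁ * U)) ≤ G₃ (CC * s) := by
        apply kinf_mono hG₃ (by positivity)
        rw [hCCdef, hsdef]
        nlinarith [norm_nonneg X₀, hC₁0.le, hlambar0.le]
      have h5 : Real.exp (ε⁻¹ * D) * (G₂ ‖X₀‖ + G₃ (lambar * (C₁ * U))) ≤ Φ s := by
        rw [hΦdef]
        simp only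
        exact mul_le_mul_of_nonneg_left (by linarith) (Real.exp_pos _).le
      linarith
    have hρbd : ∀ x ∈ Icc (0:ℝ) D, |κ (p₁ x)| ≤ ρ (τ (Φ s)) := by
      intro x hx
      have h1 : G₁ ‖p₁ x‖ ≤ Φ s := le_trans (hΘbd (p₁ x)).1 (hΘbd2 x hx)
      have h2 : ‖p₁ x‖ ≤ τ (Φ s) := hτkey _ _ (norm_nonneg _) h1
      calc |κ (p₁ x)| ≤ ρ ‖p₁ x‖ := hκρ _
        _ ≤ ρ (τ (Φ s)) := kinf_mono hρ (norm_nonneg _) h2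
    apply ciSup_le
    rintro ⟨x, hx⟩
    show |lam (p₃ x) * Real.exp (∫ z in (0:ℝ)..x, c (x - z) / lam (p₃ z)) * u x
        - κ (p₁ x)
        + lam (p₃ x) * ∫ y in (0:ℝ)..x,
            (Real.exp (∫ z in (0:ℝ)..x, c (x - z) / lam (p₃ z)) /
              Real.exp (∫ z in (0:ℝ)..y, c (x - z) / lam (p₃ z))) *
              g (x - y) (p₂ y) / lam (p₃ y)| ≤ CC * s + ρ (τ (Φ s))
    have hw : lam (p₃ x) * Real.exp (∫ z in (0:ℝ)..x, c (x - z) / lam (p₃ z)) * u x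
        - κ (p₁ x)
        + lam (p₃ x) * ∫ y in (0:ℝ)..x,
            (Real.exp (∫ z in (0:ℝ)..x, c (x - z) / lam (p₃ z)) /
              Real.exp (∫ z in (0:ℝ)..y, c (x - z) / lam (p₃ z))) *
              g (x - y) (p₂ y) / lam (p₃ y)
        = lam (p₃ x) * p₂ x - κ (p₁ x) := by
      rw [heq2 x hx]
      ring
    rw [hw]
    have h1 : |lam (p₃ x) * p₂ x - κ (p₁ x)| ≤ |lam (p₃ x) * p₂ x| + |κ (p₁ x)| :=
      abs_sub _ _
    have h2 : |lam (p₃ x) * p₂ x| ≤ lambar * (C₁ * U) := by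
      rw [abs_mul, abs_of_pos (hlampos x)]
      exact mul_le_mul (hlamb x) (hp₂bd x hx) (abs_nonneg _) hlambar0.le
    have h3 : lambar * (C₁ * U) ≤ CC * s := by
      rw [hCCdef, hsdef]
      nlinarith [norm_nonneg X₀, hC₁0.le, hlambar0.le]
    have h4 := hρbd x hx
    linarith
end

section
/- Suppose a continuous function p : [0,D] → ℝ satisfies p(x) = k(x)·u(x) + ∫₀ˣ H(x,y) · g(x−y, p(y)) / λ₃(y) dy for all x ∈ [0,D], where u : [0,D] → ℝ is continuous, k : [0,D] → ℝ satisfies |k(x)| ≤ K₁ for all x, H is continuous on the triangle {(x,y) : 0 ≤ y ≤ x ≤ D} with |H(x,y)| ≤ K₂, λ₃ : [0,D] → ℝ satisfies λ₃(y) ≥ ε > 0, and g : [0,D] × ℝ → ℝ is continuous with |g(x,v)| ≤ Lg·|v| for all x and v. Then sup_{x∈[0,D]} |p(x)| ≤ K₁ · (sup_{x∈[0,D]} |u(x)|) · exp(K₂·Lg·D / ε). -/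
open Set MeasureTheory

/-- Grönwall-type bound on the second predictor layer `p₂`. -/
theorem stmt1
    (D ε K₁ K₂ Lg : ℝ) (hD : 0 < D) (hε : 0 < ε)
    (hK₁ : 0 ≤ K₁) (hK₂ : 0 ≤ K₂) (hLg : 0 ≤ Lg)
    (p u k lam₃ : ℝ → ℝ) (H : ℝ → ℝ → ℝ) (g : ℝ → ℝ → ℝ)
    (hp : ContinuousOn p (Icc (0:ℝ) D))
    (hu : ContinuousOn u (Icc (0:ℝ) D))
    (hk : ∀ x ∈ Icc (0:ℝ) D, |k x| ≤ K₁)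
    (hH : ContinuousOn (fun q : ℝ × ℝ => H q.1 q.2)
      {q : ℝ × ℝ | 0 ≤ q.2 ∧ q.2 ≤ q.1 ∧ q.1 ≤ D})
    (hHbd : ∀ x y : ℝ, 0 ≤ y → y ≤ x → x ≤ D → |H x y| ≤ K₂)
    (hlam : ∀ y ∈ Icc (0:ℝ) D, ε ≤ lam₃ y)
    (hg : Continuous fun q : ℝ × ℝ => g q.1 q.2)
    (hgbd : ∀ x ∈ Icc (0:ℝ) D, ∀ v : ℝ, |g x v| ≤ Lg * |v|)
    (heq : ∀ x ∈ Icc (0:ℝ) D,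
      p x = k x * u x + ∫ y in (0:ℝ)..x, H x y * g (x - y) (p y) / lam₃ y) :
    (⨆ x : Icc (0:ℝ) D, |p x|) ≤
      K₁ * (⨆ x : Icc (0:ℝ) D, |u x|) * Real.exp (K₂ * Lg * D / ε) := by
  haveI : Nonempty (Icc (0:ℝ) D) := ⟨⟨0, le_refl 0, hD.le⟩⟩
  set U : ℝ := ⨆ x : Icc (0:ℝ) D, |u x| with hUdef
  -- bound on U
  have hUbdd : BddAbove (Set.range fun x : Icc (0:ℝ) D => |u x|) := by
    have := (isCompact_Icc (a := (0:ℝ)) (b := D)).bddAbove_image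
      (continuous_abs.comp_continuousOn hu)
    rwa [← Set.range_restrict] at this
  have hU : ∀ x ∈ Icc (0:ℝ) D, |u x| ≤ U := fun x hx =>
    le_ciSup hUbdd (⟨x, hx⟩ : Icc (0:ℝ) D)
  have hU0 : 0 ≤ U := le_trans (abs_nonneg _) (hU 0 ⟨le_refl 0, hD.le⟩)
  set A : ℝ := K₁ * U with hAdef
  set C : ℝ := K₂ * Lg / ε with hCdef
  have hA0 : 0 ≤ A := mul_nonneg hK₁ hU0
  have hC0 : 0 ≤ C := div_nonneg (mul_nonneg hK₂ hLg) hε.le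
  -- clamp and extend p
  set π : ℝ → ℝ := fun y => max 0 (min y D) with hπdef
  have hπmem : ∀ y, π y ∈ Icc (0:ℝ) D := fun y =>
    ⟨le_max_left _ _, max_le hD.le (min_le_right _ _)⟩
  have hπcont : Continuous π := continuous_const.max (continuous_id.min continuous_const)
  have hπeq : ∀ y ∈ Icc (0:ℝ) D, π y = y := fun y hy => by
    simp [hπdef, min_eq_left hy.2, max_eq_right hy.1]
  set q : ℝ → ℝ := fun y => |p (π y)| with hqdef
  have hqcont : Continuous q :=
    continuous_abs.comp (hp.comp_continuous hπcont hπmem)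
  have hqnonneg : ∀ y, 0 ≤ q y := fun y => abs_nonneg _
  have hqeq : ∀ y ∈ Icc (0:ℝ) D, q y = |p y| := fun y hy => by
    simp [hqdef, hπeq y hy]
  set F : ℝ → ℝ := fun x => ∫ y in (0:ℝ)..x, q y with hFdef
  have hF0 : F 0 = 0 := intervalIntegral.integral_same
  have hFnonneg : ∀ x, 0 ≤ x → 0 ≤ F x := fun x hx =>
    intervalIntegral.integral_nonneg hx (fun y _ => hqnonneg y)
  -- key integral inequality
  have key : ∀ x ∈ Icc (0:ℝ) D, |p x| ≤ A + C * F x := by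
    intro x hx
    obtain ⟨hx0, hxD⟩ := hx
    have hbound : ∀ y ∈ Ioc (0:ℝ) x,
        |H x y * g (x - y) (p y) / lam₃ y| ≤ C * q y := by
      intro y hy
      have hy0 : 0 ≤ y := hy.1.le
      have hyx : y ≤ x := hy.2
      have hyD : y ≤ D := hyx.trans hxD
      have hlamy : ε ≤ lam₃ y := hlam y ⟨hy0, hyD⟩
      have hlampos : 0 < lam₃ y := lt_of_lt_of_le hε hlamy
      have hnum : |H x y| * |g (x - y) (p y)| ≤ K₂ * (Lg * |p y|) := by
        apply mul_le_mul (hHbd x y hy0 hyx hxD)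
          (hgbd (x - y) ⟨sub_nonneg.2 hyx, le_trans (sub_le_self x hy0) hxD⟩ (p y))
          (abs_nonneg _) hK₂
      have : |H x y * g (x - y) (p y) / lam₃ y|
          = |H x y| * |g (x - y) (p y)| / lam₃ y := by
        rw [abs_div, abs_mul, abs_of_pos hlampos]
      rw [this, hqeq y ⟨hy0, hyD⟩]
      calc |H x y| * |g (x - y) (p y)| / lam₃ y
          ≤ K₂ * (Lg * |p y|) / ε :=
            div_le_div₀ (mul_nonneg hK₂ (mul_nonneg hLg (abs_nonneg _))) hnum hε hlamy
        _ = C * |p y| := by rw [hCdef]; ring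
    have hint : (∫ y in (0:ℝ)..x, |H x y * g (x - y) (p y) / lam₃ y|)
        ≤ ∫ y in (0:ℝ)..x, C * q y := by
      rw [intervalIntegral.integral_of_le hx0, intervalIntegral.integral_of_le hx0]
      apply integral_mono_of_nonneg
      · exact Filter.Eventually.of_forall fun y => abs_nonneg _
      · exact (continuous_const.mul hqcont).integrableOn_Ioc
      · exact (ae_restrict_iff' measurableSet_Ioc).2 (Filter.Eventually.of_forall hbound)
    have habs : |∫ y in (0:ℝ)..x, H x y * g (x - y) (p y) / lam₃ y|
        ≤ ∫ y in (0:ℝ)..x, |H x y * g (x - y) (p y) / lam₃ y| := by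
      simpa only [Real.norm_eq_abs] using
        intervalIntegral.norm_integral_le_integral_norm
          (f := fun y => H x y * g (x - y) (p y) / lam₃ y) (μ := volume)
          (a := (0:ℝ)) (b := x) hx0
    have hconst : (∫ y in (0:ℝ)..x, C * q y) = C * F x := by
      rw [hFdef]; exact intervalIntegral.integral_const_mul _ _
    calc |p x| = |k x * u x + ∫ y in (0:ℝ)..x, H x y * g (x - y) (p y) / lam₃ y| := by
          rw [heq x ⟨hx0, hxD⟩]
      _ ≤ |k x * u x| + |∫ y in (0:ℝ)..x, H x y * g (x - y) (p y) / lam₃ y| :=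
          abs_add_le _ _
      _ ≤ A + C * F x := by
          apply add_le_add
          · rw [abs_mul, hAdef]
            exact mul_le_mul (hk x ⟨hx0, hxD⟩) (hU x ⟨hx0, hxD⟩) (abs_nonneg _) hK₁
          · rw [← hconst]; exact le_trans habs hint
  -- Grönwall
  have hFderiv : ∀ t ∈ Ico (0:ℝ) D, HasDerivWithinAt F (q t) (Ici t) t := by
    intro t _
    exact (intervalIntegral.integral_hasDerivAt_right
      (hqcont.intervalIntegrable 0 t)
      hqcont.aestronglyMeasurable.stronglyMeasurableAtFilter
      hqcont.continuousAt).hasDerivWithinAt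
  have hFcont : ContinuousOn F (Icc (0:ℝ) D) :=
    (intervalIntegral.continuous_primitive (fun a b => hqcont.intervalIntegrable a b)
      0).continuousOn
  have hgron : ∀ x ∈ Icc (0:ℝ) D, ‖F x‖ ≤ gronwallBound 0 C A (x - 0) := by
    apply norm_le_gronwallBound_of_norm_deriv_right_le hFcont hFderiv
    · simp [hF0]
    · intro t ht
      have hFt : 0 ≤ F t := hFnonneg t ht.1
      rw [Real.norm_eq_abs, Real.norm_eq_abs, abs_of_nonneg hFt,
        abs_of_nonneg (hqnonneg t), hqeq t ⟨ht.1, ht.2.le⟩]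
      linarith [key t ⟨ht.1, ht.2.le⟩]
  -- combine
  apply ciSup_le
  rintro ⟨x, hx⟩
  have hFx : 0 ≤ F x := hFnonneg x hx.1
  have hFle : F x ≤ gronwallBound 0 C A x := by
    have := hgron x hx
    rwa [Real.norm_eq_abs, abs_of_nonneg hFx, sub_zero] at this
  have hfinal : A + C * gronwallBound 0 C A x ≤ A * Real.exp (C * D) := by
    by_cases hC : C = 0
    · rw [hC]; simp
    · rw [gronwallBound_of_K_ne_0 hC]
      have h1 : A + C * (0 * Real.exp (C * x) + A / C * (Real.exp (C * x) - 1))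
          = A * Real.exp (C * x) := by field_simp; ring
      rw [h1]
      exact mul_le_mul_of_nonneg_left
        (Real.exp_le_exp.2 (mul_le_mul_of_nonneg_left hx.2 hC0)) hA0
  have : |p x| ≤ A * Real.exp (C * D) :=
    le_trans (key x hx) (le_trans (by nlinarith [hFle]) hfinal)
  calc |p x| ≤ A * Real.exp (C * D) := this
    _ = K₁ * U * Real.exp (K₂ * Lg * D / ε) := by
        rw [hAdef, hCdef, show K₂ * Lg / ε * D = K₂ * Lg * D / ε by ring]
end

section
/- Let p₁ : [0,D] → ℝⁿ be continuously differentiable with p₁'(x) = f(p₁(x), λ₃(x)·p₂(x)) / λ₃(x) for all x ∈ [0,D], where λ₃ : [0,D] → [ε, λ̄] and p₂ : [0,D] → ℝ are continuous with sup_{x∈[0,D]} |p₂(x)| ≤ M. Then Θ(p₁(x)) ≤ e^{x/ε} · Θ(p₁(0)) + (e^{x/ε} − 1) · G₃(λ̄·M) for all x ∈ [0,D]. -/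
open Set

/-- Bound on the first predictor layer `p₁` via the forward-completeness Lyapunov inequality. -/
theorem stmt2
    (n : ℕ) (D ε lambar M : ℝ) (hD : 0 < D) (hε : 0 < ε) (hεlam : ε ≤ lambar)
    (hM : 0 ≤ M)
    (f : EuclideanSpace ℝ (Fin n) → ℝ → EuclideanSpace ℝ (Fin n))
    (hf : Continuous fun q : EuclideanSpace ℝ (Fin n) × ℝ => f q.1 q.2)
    (Θ : EuclideanSpace ℝ (Fin n) → ℝ) (hΘ : ContDiff ℝ 1 Θ)
    (hΘ0 : ∀ X, 0 ≤ Θ X)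
    (G₃ : ℝ → ℝ) (hG₃ : IsKInf G₃)
    (hΘf : ∀ (X : EuclideanSpace ℝ (Fin n)) (w : ℝ),
      fderiv ℝ Θ X (f X w) ≤ Θ X + G₃ |w|)
    (lam₃ p₂ : ℝ → ℝ)
    (hlamc : ContinuousOn lam₃ (Icc (0:ℝ) D))
    (hlam : ∀ x ∈ Icc (0:ℝ) D, ε ≤ lam₃ x ∧ lam₃ x ≤ lambar)
    (hp₂c : ContinuousOn p₂ (Icc (0:ℝ) D))
    (hp₂ : ∀ x ∈ Icc (0:ℝ) D, |p₂ x| ≤ M)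
    (p₁ : ℝ → EuclideanSpace ℝ (Fin n))
    (hp₁ : ∀ x ∈ Icc (0:ℝ) D,
      HasDerivAt p₁ ((lam₃ x)⁻¹ • f (p₁ x) (lam₃ x * p₂ x)) x) :
    ∀ x ∈ Icc (0:ℝ) D,
      Θ (p₁ x) ≤ Real.exp (x / ε) * Θ (p₁ 0) +
        (Real.exp (x / ε) - 1) * G₃ (lambar * M) := by
  obtain ⟨hG₃c, hG₃mono, hG₃0, hG₃unb⟩ := hG₃
  have hC0 : 0 ≤ G₃ (lambar * M) := by
    rw [← hG₃0]
    exact hG₃mono.monotoneOn (le_refl (0:ℝ)) (mul_nonneg (hε.le.trans hεlam) hM)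
      (mul_nonneg (hε.le.trans hεlam) hM)
  set g : ℝ → ℝ := fun x => Θ (p₁ x) with hg
  set g' : ℝ → ℝ :=
    fun x => (lam₃ x)⁻¹ * fderiv ℝ Θ (p₁ x) (f (p₁ x) (lam₃ x * p₂ x)) with hg'
  have hderiv : ∀ x ∈ Icc (0:ℝ) D, HasDerivAt g (g' x) x := by
    intro x hx
    have h1 := ((hΘ.differentiable one_ne_zero) (p₁ x)).hasFDerivAt.comp_hasDerivAt x (hp₁ x hx)
    simp only [hg, hg', map_smul, smul_eq_mul] at h1
    exact h1
  have hp₁c : ContinuousOn p₁ (Icc (0:ℝ) D) :=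
    fun x hx => (hp₁ x hx).continuousAt.continuousWithinAt
  have hgc : ContinuousOn g (Icc (0:ℝ) D) := hΘ.continuous.comp_continuousOn hp₁c
  have hbound : ∀ x ∈ Icc (0:ℝ) D, g' x ≤ ε⁻¹ * g x + G₃ (lambar * M) * ε⁻¹ := by
    intro x hx
    obtain ⟨hl1, hl2⟩ := hlam x hx
    have hlpos : 0 < lam₃ x := lt_of_lt_of_le hε hl1
    have hwle : |lam₃ x * p₂ x| ≤ lambar * M := by
      rw [abs_mul, abs_of_pos hlpos]
      exact mul_le_mul hl2 (hp₂ x hx) (abs_nonneg _) (hε.le.trans hεlam)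
    have hG3le : G₃ |lam₃ x * p₂ x| ≤ G₃ (lambar * M) :=
      hG₃mono.monotoneOn (Set.mem_Ici.mpr (abs_nonneg _)) (mul_nonneg (hε.le.trans hεlam) hM) hwle
    have h1 : g' x ≤ (lam₃ x)⁻¹ * (Θ (p₁ x) + G₃ |lam₃ x * p₂ x|) :=
      mul_le_mul_of_nonneg_left (hΘf (p₁ x) (lam₃ x * p₂ x)) (inv_nonneg.mpr hlpos.le)
    have hpos : 0 ≤ Θ (p₁ x) + G₃ |lam₃ x * p₂ x| := by
      have : (0:ℝ) ≤ G₃ |lam₃ x * p₂ x| := by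
        rw [← hG₃0]
        exact hG₃mono.monotoneOn (Set.mem_Ici.mpr le_rfl) (Set.mem_Ici.mpr (abs_nonneg _)) (abs_nonneg _)
      linarith [hΘ0 (p₁ x)]
    have h2 : (lam₃ x)⁻¹ * (Θ (p₁ x) + G₃ |lam₃ x * p₂ x|)
        ≤ ε⁻¹ * (Θ (p₁ x) + G₃ |lam₃ x * p₂ x|) :=
      mul_le_mul_of_nonneg_right (inv_anti₀ hε hl1) hpos
    have h3 : ε⁻¹ * (Θ (p₁ x) + G₃ |lam₃ x * p₂ x|)
        ≤ ε⁻¹ * (Θ (p₁ x) + G₃ (lambar * M)) :=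
      mul_le_mul_of_nonneg_left (by linarith) (inv_nonneg.mpr hε.le)
    have : g' x ≤ ε⁻¹ * (Θ (p₁ x) + G₃ (lambar * M)) := le_trans h1 (le_trans h2 h3)
    calc g' x ≤ ε⁻¹ * (Θ (p₁ x) + G₃ (lambar * M)) := this
      _ = ε⁻¹ * g x + G₃ (lambar * M) * ε⁻¹ := by ring
  have key := le_gronwallBound_of_liminf_deriv_right_le (f := g) (f' := g')
    (δ := g 0) (K := ε⁻¹) (ε := G₃ (lambar * M) * ε⁻¹) (a := 0) (b := D) hgc
    (fun x hx r hr => by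
      have hslope := hasDerivAt_iff_tendsto_slope.mp (hderiv x (Ico_subset_Icc_self hx))
      have hlt : ∀ᶠ z in nhdsWithin x (Set.Ioi x), slope g x z < r := by
        have : nhdsWithin x (Set.Ioi x) ≤ nhdsWithin x {x}ᶜ := by
          apply nhdsWithin_mono
          intro z hz
          exact ne_of_gt hz
        exact (hslope.mono_left this).eventually_lt_const hr
      refine hlt.frequently.mono fun z hz => ?_
      simpa [slope, div_eq_inv_mul] using hz)
    le_rfl (fun x hx => hbound x (Ico_subset_Icc_self hx))
  intro x hx
  have h := key x hx
  rw [gronwallBound_of_K_ne_0 (inv_ne_zero hε.ne')] at h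
  have hεinv : ε⁻¹ ≠ 0 := inv_ne_zero hε.ne'
  calc Θ (p₁ x) = g x := rfl
    _ ≤ g 0 * Real.exp (ε⁻¹ * (x - 0)) +
        G₃ (lambar * M) * ε⁻¹ / ε⁻¹ * (Real.exp (ε⁻¹ * (x - 0)) - 1) := h
    _ = Real.exp (x / ε) * Θ (p₁ 0) + (Real.exp (x / ε) - 1) * G₃ (lambar * M) := by
        rw [mul_div_assoc, div_self hεinv, mul_one]
        rw [show ε⁻¹ * (x - 0) = x / ε by ring]
        ring
end

section
/- Suppose u : [0,D] → ℝ is continuous and satisfies u(x) = (L(x,x)/λ₃(x)) · (w(x) + κ(π₁(x))) − ∫₀ˣ L(x,y) · g(x−y, π₂(y)) / λ₃(y) dy for all x ∈ [0,D], where π₂(y) := (w(y) + κ(π₁(y))) / λ₃(y), w : [0,D] → ℝ is continuous, π₁ : [0,D] → ℝⁿ is continuous with sup_{x∈[0,D]} |π₁(x)| ≤ P, λ₃ : [0,D] → ℝ satisfies λ₃(y) ≥ ε > 0, L is continuous on the triangle {(x,y) : 0 ≤ y ≤ x ≤ D} with |L(x,y)| ≤ L̄, κ : ℝⁿ → ℝ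 satisfies |κ(ξ)| ≤ ρ(|ξ|) for all ξ, and g : [0,D] × ℝ → ℝ is continuous with |g(x,v)| ≤ Lg·|v|. Then sup_{x∈[0,D]} |u(x)| ≤ (L̄/ε) · (1 + D·Lg/ε) · ( sup_{x∈[0,D]} |w(x)| + ρ(P) ). -/
open Set

/-! Monotonicity of `ρ` bounds the source `w + κ ∘ π₁` by `sup |w| + ρ(P)`. The boundary term then
costs `L̄/ε` times this bound, and the integrand `L̄ · Lg (bound/ε) / ε` integrated over `[0, x] ⊆ [0, D]`
gives the extra factor `D · Lg / ε`. -/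

theorem abs_le_ciSup_abs_of_continuousOn {α : Type*} [TopologicalSpace α] {s : Set α}
    {f : α → ℝ} (hs : IsCompact s) (hf : ContinuousOn f s) {x : α} (hx : x ∈ s) :
    |f x| ≤ ⨆ y : s, |f y| := by
  obtain ⟨C, hC⟩ := hs.exists_bound_of_continuousOn hf
  have hbdd : BddAbove (range fun y : s => |f y|) := ⟨C, by rintro _ ⟨y, rfl⟩; exact hC y y.2⟩
  exact le_ciSup hbdd ⟨x, hx⟩

theorem abs_div_le_div_of_abs_le {a b A ε : ℝ} (ha : |a| ≤ A) (hε : 0 < ε) (hb : ε ≤ b) :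
    |a / b| ≤ A / ε := by
  rw [abs_div]
  exact div_le_div₀ ((abs_nonneg a).trans ha) ha hε (hb.trans (le_abs_self b))

section Volterra

variable {D ε Lbar Lg M : ℝ} {L g : ℝ → ℝ → ℝ} {h lam : ℝ → ℝ}

theorem abs_volterra_integrand_le (hε : 0 < ε) (hLbar : 0 ≤ Lbar) (hLg : 0 ≤ Lg)
    (hlam : ∀ y ∈ Icc (0:ℝ) D, ε ≤ lam y)
    (hLbd : ∀ x y : ℝ, 0 ≤ y → y ≤ x → x ≤ D → |L x y| ≤ Lbar)
    (hgbd : ∀ x ∈ Icc (0:ℝ) D, ∀ v : ℝ, |g x v| ≤ Lg * |v|)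
    (hh : ∀ y ∈ Icc (0:ℝ) D, |h y| ≤ M) {x y : ℝ} (hy : y ∈ Icc 0 x) (hxD : x ≤ D) :
    |L x y * g (x - y) (h y / lam y) / lam y| ≤ Lbar * (Lg * (M / ε)) / ε := by
  have hyD : y ∈ Icc (0:ℝ) D := ⟨hy.1, hy.2.trans hxD⟩
  have hxy : x - y ∈ Icc (0:ℝ) D := ⟨by linarith [hy.2], by linarith [hy.1]⟩
  have hv : |h y / lam y| ≤ M / ε := abs_div_le_div_of_abs_le (hh y hyD) hε (hlam y hyD)
  have hgv : |g (x - y) (h y / lam y)| ≤ Lg * (M / ε) :=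
    (hgbd _ hxy _).trans (mul_le_mul_of_nonneg_left hv hLg)
  refine abs_div_le_div_of_abs_le ?_ hε (hlam y hyD)
  rw [abs_mul]
  exact mul_le_mul (hLbd x y hy.1 hy.2 hxD) hgv (abs_nonneg _) hLbar

theorem abs_volterra_le (hε : 0 < ε) (hLbar : 0 ≤ Lbar) (hLg : 0 ≤ Lg)
    (hlam : ∀ y ∈ Icc (0:ℝ) D, ε ≤ lam y)
    (hLbd : ∀ x y : ℝ, 0 ≤ y → y ≤ x → x ≤ D → |L x y| ≤ Lbar)
    (hgbd : ∀ x ∈ Icc (0:ℝ) D, ∀ v : ℝ, |g x v| ≤ Lg * |v|)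
    (hh : ∀ y ∈ Icc (0:ℝ) D, |h y| ≤ M) {x : ℝ} (hx : x ∈ Icc 0 D) :
    |(L x x / lam x) * h x - ∫ y in (0:ℝ)..x, L x y * g (x - y) (h y / lam y) / lam y|
      ≤ (Lbar / ε) * (1 + D * Lg / ε) * M := by
  have hM : 0 ≤ M := (abs_nonneg _).trans (hh x hx)
  have hboundary : |(L x x / lam x) * h x| ≤ (Lbar / ε) * M := by
    rw [abs_mul]
    exact mul_le_mul (abs_div_le_div_of_abs_le (hLbd x x hx.1 le_rfl hx.2) hε (hlam x hx))
      (hh x hx) (abs_nonneg _) (div_nonneg hLbar hε.le)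
  have hintegral : |∫ y in (0:ℝ)..x, L x y * g (x - y) (h y / lam y) / lam y|
      ≤ (Lbar * (Lg * (M / ε)) / ε) * x := by
    have := intervalIntegral.norm_integral_le_of_norm_le_const
      (a := 0) (b := x) (C := Lbar * (Lg * (M / ε)) / ε)
      (f := fun y => L x y * g (x - y) (h y / lam y) / lam y) fun y hy => by
        rw [uIoc_of_le hx.1] at hy
        exact abs_volterra_integrand_le hε hLbar hLg hlam hLbd hgbd hh
          (Ioc_subset_Icc_self hy) hx.2
    simpa [abs_of_nonneg hx.1] using this
  have hxD : (Lbar * (Lg * (M / ε)) / ε) * x ≤ (Lbar * (Lg * (M / ε)) / ε) * D :=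
    mul_le_mul_of_nonneg_left hx.2 (by positivity)
  calc _ ≤ |(L x x / lam x) * h x| +
          |∫ y in (0:ℝ)..x, L x y * g (x - y) (h y / lam y) / lam y| := abs_sub _ _
    _ ≤ (Lbar / ε) * M + (Lbar * (Lg * (M / ε)) / ε) * D := by linarith
    _ = (Lbar / ε) * (1 + D * Lg / ε) * M := by field_simp

end Volterra

theorem stmt3_general
    (n : ℕ) (D ε Lbar Lg P : ℝ) (hD : 0 < D) (hε : 0 < ε)
    (hLbar : 0 ≤ Lbar) (hLg : 0 ≤ Lg) (hP : 0 ≤ P)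
    (ρ : ℝ → ℝ) (hρ : IsKInf ρ)
    (u w lam₃ : ℝ → ℝ) (π₁ : ℝ → EuclideanSpace ℝ (Fin n))
    (L : ℝ → ℝ → ℝ) (κ : EuclideanSpace ℝ (Fin n) → ℝ) (g : ℝ → ℝ → ℝ)
    (hw : ContinuousOn w (Icc (0:ℝ) D))
    (hπ₁ : ∀ x ∈ Icc (0:ℝ) D, ‖π₁ x‖ ≤ P)
    (hlam : ∀ y ∈ Icc (0:ℝ) D, ε ≤ lam₃ y)
    (hLbd : ∀ x y : ℝ, 0 ≤ y → y ≤ x → x ≤ D → |L x y| ≤ Lbar)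
    (hκ : ∀ ξ : EuclideanSpace ℝ (Fin n), |κ ξ| ≤ ρ ‖ξ‖)
    (hgbd : ∀ x ∈ Icc (0:ℝ) D, ∀ v : ℝ, |g x v| ≤ Lg * |v|)
    (heq : ∀ x ∈ Icc (0:ℝ) D,
      u x = (L x x / lam₃ x) * (w x + κ (π₁ x)) -
        ∫ y in (0:ℝ)..x, L x y * g (x - y) ((w y + κ (π₁ y)) / lam₃ y) / lam₃ y) :
    (⨆ x : Icc (0:ℝ) D, |u x|) ≤
      (Lbar / ε) * (1 + D * Lg / ε) *
        ((⨆ x : Icc (0:ℝ) D, |w x|) + ρ P) := by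
  have : Nonempty (Icc (0:ℝ) D) := ⟨⟨0, le_rfl, hD.le⟩⟩
  have hsource : ∀ y ∈ Icc (0:ℝ) D,
      |w y + κ (π₁ y)| ≤ (⨆ x : Icc (0:ℝ) D, |w x|) + ρ P := fun y hy =>
    (abs_add_le _ _).trans <| add_le_add
      (abs_le_ciSup_abs_of_continuousOn isCompact_Icc hw hy)
      ((hκ _).trans (hρ.2.1.monotoneOn (norm_nonneg _) hP (hπ₁ y hy)))
  refine ciSup_le fun x => ?_
  rw [heq x x.2]
  exact abs_volterra_le hε hLbar hLg hlam hLbd hgbd hsource x.2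

/-- Direct estimate on the inverse backstepping transform. -/
theorem stmt3
    (n : ℕ) (D ε Lbar Lg P : ℝ) (hD : 0 < D) (hε : 0 < ε)
    (hLbar : 0 ≤ Lbar) (hLg : 0 ≤ Lg) (hP : 0 ≤ P)
    (ρ : ℝ → ℝ) (hρ : IsKInf ρ)
    (u w lam₃ : ℝ → ℝ) (π₁ : ℝ → EuclideanSpace ℝ (Fin n))
    (L : ℝ → ℝ → ℝ) (κ : EuclideanSpace ℝ (Fin n) → ℝ) (g : ℝ → ℝ → ℝ)
    (hu : ContinuousOn u (Icc (0:ℝ) D))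
    (hw : ContinuousOn w (Icc (0:ℝ) D))
    (hπ₁c : ContinuousOn π₁ (Icc (0:ℝ) D))
    (hπ₁ : ∀ x ∈ Icc (0:ℝ) D, ‖π₁ x‖ ≤ P)
    (hlam : ∀ y ∈ Icc (0:ℝ) D, ε ≤ lam₃ y)
    (hL : ContinuousOn (fun q : ℝ × ℝ => L q.1 q.2)
      {q : ℝ × ℝ | 0 ≤ q.2 ∧ q.2 ≤ q.1 ∧ q.1 ≤ D})
    (hLbd : ∀ x y : ℝ, 0 ≤ y → y ≤ x → x ≤ D → |L x y| ≤ Lbar)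
    (hκ : ∀ ξ : EuclideanSpace ℝ (Fin n), |κ ξ| ≤ ρ ‖ξ‖)
    (hg : Continuous fun q : ℝ × ℝ => g q.1 q.2)
    (hgbd : ∀ x ∈ Icc (0:ℝ) D, ∀ v : ℝ, |g x v| ≤ Lg * |v|)
    (heq : ∀ x ∈ Icc (0:ℝ) D,
      u x = (L x x / lam₃ x) * (w x + κ (π₁ x)) -
        ∫ y in (0:ℝ)..x, L x y * g (x - y) ((w y + κ (π₁ y)) / lam₃ y) / lam₃ y) :
    (⨆ x : Icc (0:ℝ) D, |u x|) ≤
      (Lbar / ε) * (1 + D * Lg / ε) *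
        ((⨆ x : Icc (0:ℝ) D, |w x|) + ρ P) :=
  stmt3_general n D ε Lbar Lg P hD hε hLbar hLg hP ρ hρ u w lam₃ π₁ L κ g hw hπ₁ hlam hLbd hκ hgbd
    heq
end

section
/- For every class KL function β, every class K∞ function k, and all constants τ > 0 and T ≥ 0, there exists a class KL function β̃ such that the following holds: for every continuous function X : [−τ,∞) → ℝⁿ and every bounded function w : [0,∞) → ℝ satisfying (i) |X(t)| ≤ β(|X(s)|, t−s) + k( sup_{σ∈[s,t]} |w(σ)| ) for all t ≥ s ≥ 0, and (ii) w(t) = 0 for all t ≥ T, one has for all t ≥ 0: sup_{s∈[t−τ, t]} |X(s)| ≤ β̃( sup_{s∈[−τ,0]} |X(s)| + sup_{σ≥0} |w(σ)| , t ). -/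
open Set Filter

/-- A class `KL` function. -/
def IsKL (β : ℝ → ℝ → ℝ) : Prop :=
  (∀ t : ℝ, 0 ≤ t → ContinuousOn (fun s => β s t) (Set.Ici 0) ∧
    StrictMonoOn (fun s => β s t) (Set.Ici 0) ∧ β 0 t = 0) ∧
  (∀ s : ℝ, 0 ≤ s → AntitoneOn (fun t => β s t) (Set.Ici 0) ∧
    Tendsto (fun t => β s t) atTop (nhds 0))

/-- ISS combined with finite-time vanishing of the input yields a class `KL` bound on the
plant state. -/
theorem stmt4
    (n : ℕ) (β : ℝ → ℝ → ℝ) (k : ℝ → ℝ) (τ T : ℝ)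
    (hβ : IsKL β) (hk : IsKInf k) (hτ : 0 < τ) (hT : 0 ≤ T) :
    ∃ βt : ℝ → ℝ → ℝ, IsKL βt ∧
      ∀ (X : ℝ → EuclideanSpace ℝ (Fin n)) (w : ℝ → ℝ),
        ContinuousOn X (Ici (-τ)) →
        (∃ B : ℝ, ∀ t : ℝ, 0 ≤ t → |w t| ≤ B) →
        (∀ s t : ℝ, 0 ≤ s → s ≤ t →
          ‖X t‖ ≤ β ‖X s‖ (t - s) + k (⨆ σ : Icc s t, |w σ|)) →
        (∀ t : ℝ, T ≤ t → w t = 0) →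
        ∀ t : ℝ, 0 ≤ t →
          (⨆ s : Icc (t - τ) t, ‖X s‖) ≤
            βt ((⨆ s : Icc (-τ) (0:ℝ), ‖X s‖) + ⨆ σ : Ici (0:ℝ), |w σ|) t := by
  obtain ⟨hβ1, hβ2⟩ := hβ
  obtain ⟨hkc, hkm, hk0, _⟩ := hk
  -- basic monotonicity / nonnegativity facts
  have hβmono : ∀ t : ℝ, 0 ≤ t → MonotoneOn (fun s => β s t) (Ici 0) :=
    fun t ht => (hβ1 t ht).2.1.monotoneOn
  have hβnn : ∀ s t : ℝ, 0 ≤ s → 0 ≤ t → 0 ≤ β s t := by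
    intro s t hs ht
    have := hβmono t ht (self_mem_Ici) hs hs
    simpa [(hβ1 t ht).2.2] using this
  have hkmono : MonotoneOn k (Ici 0) := hkm.monotoneOn
  have hknn : ∀ a : ℝ, 0 ≤ a → 0 ≤ k a := by
    intro a ha
    have := hkmono (self_mem_Ici) ha ha
    simpa [hk0] using this
  set M : ℝ → ℝ := fun a => β a 0 + k a with hMdef
  have hM0 : M 0 = 0 := by simp [hMdef, (hβ1 0 le_rfl).2.2, hk0]
  have hMnn : ∀ a : ℝ, 0 ≤ a → 0 ≤ M a := fun a ha =>
    add_nonneg (hβnn a 0 ha le_rfl) (hknn a ha)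
  have hMmono : MonotoneOn M (Ici 0) := fun a ha b hb hab =>
    add_le_add (hβmono 0 le_rfl ha hb hab) (hkmono ha hb hab)
  have hMsmono : StrictMonoOn M (Ici 0) := fun a ha b hb hab =>
    add_lt_add_of_lt_of_le ((hβ1 0 le_rfl).2.1 ha hb hab) (hkmono ha hb hab.le)
  refine ⟨fun a t => (a + M a) * Real.exp (T + τ - t) + β (M a) (max (t - τ - T) 0),
    ⟨?_, ?_⟩, ?_⟩
  · -- K-part: for each fixed t ≥ 0
    intro t ht
    have hc : (0:ℝ) ≤ max (t - τ - T) 0 := le_max_right _ _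
    have hMcont : ContinuousOn M (Ici 0) := ((hβ1 0 le_rfl).1).add hkc
    refine ⟨?_, ?_, ?_⟩
    · exact ((continuousOn_id.add hMcont).mul continuousOn_const).add
        (((hβ1 _ hc).1).comp hMcont (fun a ha => hMnn a ha))
    · intro a ha b hb hab
      have h1 : (a + M a) * Real.exp (T + τ - t) < (b + M b) * Real.exp (T + τ - t) :=
        mul_lt_mul_of_pos_right
          (add_lt_add_of_lt_of_le hab (hMmono ha hb hab.le)) (Real.exp_pos _)
      have h2 : β (M a) (max (t - τ - T) 0) ≤ β (M b) (max (t - τ - T) 0) :=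
        hβmono _ hc (hMnn a ha) (hMnn b hb) (hMmono ha hb hab.le)
      exact add_lt_add_of_lt_of_le h1 h2
    · simp [hM0, (hβ1 _ hc).2.2]
  · -- L-part: for each fixed a ≥ 0
    intro a ha
    have hMa : (0:ℝ) ≤ M a := hMnn a ha
    constructor
    · intro t1 ht1 t2 ht2 h12
      have h1 : (a + M a) * Real.exp (T + τ - t2) ≤ (a + M a) * Real.exp (T + τ - t1) :=
        mul_le_mul_of_nonneg_left (Real.exp_le_exp.2 (by linarith)) (add_nonneg ha hMa)
      have h2 : β (M a) (max (t2 - τ - T) 0) ≤ β (M a) (max (t1 - τ - T) 0) :=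
        (hβ2 (M a) hMa).1 (mem_Ici.2 (le_max_right _ _)) (mem_Ici.2 (le_max_right _ _))
          (max_le_max (by linarith) le_rfl)
      exact add_le_add h1 h2
    · have h1 : Tendsto (fun t : ℝ => (a + M a) * Real.exp (T + τ - t)) atTop (nhds 0) := by
        have hb : Tendsto (fun t : ℝ => T + τ - t) atTop atBot := by
          apply tendsto_atTop_atBot.mpr
          intro b; exact ⟨T + τ - b, fun x hx => by linarith⟩
        have := (Real.tendsto_exp_atBot.comp hb).const_mul (a + M a)
        simpa using this
      have h2 : Tendsto (fun t : ℝ => β (M a) (max (t - τ - T) 0)) atTop (nhds 0) := by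
        have hmax : Tendsto (fun t : ℝ => max (t - τ - T) 0) atTop atTop := by
          apply tendsto_atTop_atTop.mpr
          intro b; exact ⟨b + τ + T, fun x hx => le_max_of_le_left (by linarith)⟩
        exact (hβ2 (M a) hMa).2.comp hmax
      simpa using h1.add h2
  · -- the main estimate
    intro X w hX hwB hISS hwT t ht
    obtain ⟨B, hB⟩ := hwB
    set a : ℝ := (⨆ s : Icc (-τ) (0:ℝ), ‖X s‖) + ⨆ σ : Ici (0:ℝ), |w σ| with hadef
    -- boundedness facts
    have hbddX0 : BddAbove (range fun s : Icc (-τ) (0:ℝ) => ‖X s‖) := by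
      have hcomp : IsCompact (Icc (-τ) (0:ℝ)) := isCompact_Icc
      have hcont : ContinuousOn (fun s => ‖X s‖) (Icc (-τ) (0:ℝ)) :=
        (hX.mono (fun x hx => hx.1)).norm
      have := (hcomp.image_of_continuousOn hcont).bddAbove
      rwa [Set.image_eq_range] at this
    have hbddw : BddAbove (range fun σ : Ici (0:ℝ) => |w σ|) := by
      refine ⟨B, ?_⟩
      rintro x ⟨⟨σ, hσ⟩, rfl⟩
      exact hB σ hσ
    have hsupX0 : (0:ℝ) ≤ ⨆ s : Icc (-τ) (0:ℝ), ‖X s‖ :=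
      le_trans (norm_nonneg (X 0)) (le_ciSup hbddX0 ⟨0, by constructor <;> linarith⟩)
    have hsupw : (0:ℝ) ≤ ⨆ σ : Ici (0:ℝ), |w σ| :=
      le_trans (abs_nonneg (w 0)) (le_ciSup hbddw ⟨0, self_mem_Ici⟩)
    have ha : (0:ℝ) ≤ a := add_nonneg hsupX0 hsupw
    have hXle0 : ∀ s : ℝ, -τ ≤ s → s ≤ 0 → ‖X s‖ ≤ a := by
      intro s h1 h2
      calc ‖X s‖ ≤ ⨆ s : Icc (-τ) (0:ℝ), ‖X s‖ := le_ciSup hbddX0 ⟨s, h1, h2⟩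
        _ ≤ a := le_add_of_nonneg_right hsupw
    have hwle : ∀ s u : ℝ, 0 ≤ s → s ≤ u → (⨆ σ : Icc s u, |w σ|) ≤ a := by
      intro s u hs hsu
      apply Real.iSup_le _ ha
      rintro ⟨σ, hσ1, hσ2⟩
      calc |w σ| ≤ ⨆ σ : Ici (0:ℝ), |w σ| := le_ciSup hbddw ⟨σ, le_trans hs hσ1⟩
        _ ≤ a := le_add_of_nonneg_left hsupX0
    have hwnn : ∀ s u : ℝ, s ≤ u → (0:ℝ) ≤ ⨆ σ : Icc s u, |w σ| := by
      intro s u hsu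
      have hne : Nonempty (Icc s u) := (Set.nonempty_Icc.2 hsu).to_subtype
      obtain ⟨σ⟩ := hne
      exact Real.iSup_nonneg' ⟨σ, abs_nonneg _⟩
    -- key bound 1 : for s ≥ 0, ‖X s‖ ≤ M a
    have key1 : ∀ s : ℝ, 0 ≤ s → ‖X s‖ ≤ M a := by
      intro s hs
      have h0 : ‖X 0‖ ≤ a := hXle0 0 (by linarith) le_rfl
      calc ‖X s‖ ≤ β ‖X 0‖ (s - 0) + k (⨆ σ : Icc 0 s, |w σ|) := hISS 0 s le_rfl hs
        _ ≤ β a 0 + k a := by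
            refine add_le_add ?_ (hkmono (hwnn 0 s hs) ha (hwle 0 s le_rfl hs))
            calc β ‖X 0‖ (s - 0) ≤ β a (s - 0) :=
                  hβmono (s - 0) (by linarith) (norm_nonneg _) ha h0
              _ ≤ β a 0 := (hβ2 a ha).1 self_mem_Ici (by simpa using hs) (by linarith)
    -- key bound 2 : for s ≥ T, ‖X s‖ ≤ β (M a) (s - T)
    have key2 : ∀ s : ℝ, T ≤ s → ‖X s‖ ≤ β (M a) (s - T) := by
      intro s hs
      have hsup0 : (⨆ σ : Icc T s, |w σ|) = 0 := by
        have hne : Nonempty (Icc T s) := (Set.nonempty_Icc.2 hs).to_subtype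
        have : ∀ σ : Icc T s, |w σ| = 0 := fun ⟨σ, hσ1, _⟩ => by
          simp [hwT σ hσ1]
        calc (⨆ σ : Icc T s, |w σ|) = ⨆ _ : Icc T s, (0:ℝ) := by
              exact iSup_congr this
          _ = 0 := ciSup_const
      have hXT : ‖X T‖ ≤ M a := key1 T hT
      calc ‖X s‖ ≤ β ‖X T‖ (s - T) + k (⨆ σ : Icc T s, |w σ|) := hISS T s hT hs
        _ = β ‖X T‖ (s - T) := by rw [hsup0, hk0, add_zero]
        _ ≤ β (M a) (s - T) :=
            hβmono (s - T) (by linarith) (norm_nonneg _) (hMnn a ha) hXT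
    -- conclude
    have hβtnn : 0 ≤ (a + M a) * Real.exp (T + τ - t) + β (M a) (max (t - τ - T) 0) :=
      add_nonneg (mul_nonneg (add_nonneg ha (hMnn a ha)) (Real.exp_pos _).le)
        (hβnn _ _ (hMnn a ha) (le_max_right _ _))
    apply Real.iSup_le _ hβtnn
    rintro ⟨s, hs1, hs2⟩
    by_cases hcase : t ≤ T + τ
    · -- small times: constant bound
      have hbound : ‖X s‖ ≤ a + M a := by
        rcases le_or_gt s 0 with hs0 | hs0
        · exact le_trans (hXle0 s (by linarith) hs0) (le_add_of_nonneg_right (hMnn a ha))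
        · exact le_trans (key1 s hs0.le) (le_add_of_nonneg_left ha)
      have hexp : (1:ℝ) ≤ Real.exp (T + τ - t) := by
        rw [← Real.exp_zero]
        exact Real.exp_le_exp.2 (by linarith)
      calc ‖X s‖ ≤ (a + M a) * 1 := by simpa using hbound
        _ ≤ (a + M a) * Real.exp (T + τ - t) :=
            mul_le_mul_of_nonneg_left hexp (add_nonneg ha (hMnn a ha))
        _ ≤ _ := le_add_of_nonneg_right (hβnn _ _ (hMnn a ha) (le_max_right _ _))
    · -- large times: decay bound
      push_neg at hcase
      have hsT : T ≤ s := by linarith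
      have hmax : max (t - τ - T) 0 = t - τ - T := max_eq_left (by linarith)
      have h1 : ‖X s‖ ≤ β (M a) (s - T) := key2 s hsT
      have h2 : β (M a) (s - T) ≤ β (M a) (t - τ - T) :=
        (hβ2 (M a) (hMnn a ha)).1 (mem_Ici.2 (by linarith))
          (mem_Ici.2 (by linarith)) (by linarith)
      calc ‖X s‖ ≤ β (M a) (t - τ - T) := le_trans h1 h2
        _ = β (M a) (max (t - τ - T) 0) := by rw [hmax]
        _ ≤ _ := le_add_of_nonneg_left
            (mul_nonneg (add_nonneg ha (hMnn a ha)) (Real.exp_pos _).le)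
end

section
/- Suppose Q* > 0, α > 0, B_max > Q*/α, and S > (B_max − Q*/α)/Q*. Then there exists a unique Λ > 0 such that Λ·(B_max − Q*/α) = S·(1 − exp(−Λ·Q*)). -/
/-- Existence and uniqueness of the strictly positive left gain `Λ_ℓ` of the softened
bang–bang controller. -/
theorem stmt13
    (Qs α Bmax S : ℝ)
    (hQs : 0 < Qs) (hα : 0 < α) (hB : Qs / α < Bmax)
    (hS : (Bmax - Qs / α) / Qs < S) :
    ∃! Λ : ℝ, 0 < Λ ∧
      Λ * (Bmax - Qs / α) = S * (1 - Real.exp (-Λ * Qs)) := by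
  set c : ℝ := Bmax - Qs / α with hc_def
  have hc : 0 < c := by simp [hc_def]; linarith
  have hS0 : 0 < S := lt_trans (div_pos hc hQs) hS
  have hcS : c < S * Qs := by
    have := (div_lt_iff₀ hQs).mp hS
    linarith
  set f : ℝ → ℝ := fun Λ => Λ * c - S * (1 - Real.exp (-Λ * Qs)) with hf_def
  -- key convexity lemma: if f b = 0 and 0 < a < b then f a < 0
  have key : ∀ a b : ℝ, 0 < a → a < b → f b = 0 → f a < 0 := by
    intro a b ha hab hfb
    have hb : 0 < b := lt_trans ha hab
    set t : ℝ := a / b with ht_def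
    have ht0 : 0 < t := div_pos ha hb
    have ht1 : t < 1 := (div_lt_one hb).mpr hab
    have htb : t * b = a := div_mul_cancel₀ a (ne_of_gt hb)
    have hconv := strictConvexOn_exp.2 (Set.mem_univ (-b * Qs)) (Set.mem_univ 0)
      (by nlinarith [Real.exp_pos (-b*Qs)] : (-b * Qs : ℝ) ≠ 0) ht0
      (by linarith : (0:ℝ) < 1 - t) (by ring)
    simp only [smul_eq_mul, mul_zero, add_zero, Real.exp_zero, mul_one] at hconv
    have heq : t * (-b * Qs) = -a * Qs := by rw [← htb]; ring
    rw [heq] at hconv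
    have hfb' : b * c - S * (1 - Real.exp (-b * Qs)) = 0 := hfb
    show a * c - S * (1 - Real.exp (-a * Qs)) < 0
    nlinarith [hconv, hfb']
  -- existence by IVT
  have hcont : Continuous f := by
    apply Continuous.sub (continuous_id.mul continuous_const)
    exact continuous_const.mul (continuous_const.sub ((continuous_id.neg.mul continuous_const).rexp))
  set ε : ℝ := (S * Qs / c - 1) / (2 * Qs) with hε_def
  have hε : 0 < ε := by
    apply div_pos _ (by linarith)
    have : 1 < S * Qs / c := (one_lt_div hc).mpr hcS
    linarith
  have hεQ : 1 + ε * Qs < S * Qs / c := by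
    have h1 : 1 < S * Qs / c := (one_lt_div hc).mpr hcS
    have : ε * Qs = (S * Qs / c - 1) / 2 := by
      rw [hε_def]; field_simp
    rw [this]; linarith
  have hfε : f ε < 0 := by
    -- exp(-εQs) ≤ 1/(1+εQs)
    have hx : 0 < ε * Qs := mul_pos hε hQs
    have h1 : (1 : ℝ) + ε * Qs ≤ Real.exp (ε * Qs) := by
      have := Real.add_one_le_exp (ε * Qs); linarith
    have h2 : Real.exp (-ε * Qs) ≤ 1 / (1 + ε * Qs) := by
      rw [neg_mul, Real.exp_neg, inv_eq_one_div]
      exact one_div_le_one_div_of_le (by linarith) h1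
    have h3 : 1 - Real.exp (-ε * Qs) ≥ ε * Qs / (1 + ε * Qs) := by
      have : 1 - 1 / (1 + ε * Qs) = ε * Qs / (1 + ε * Qs) := by
        field_simp; ring
      linarith
    have h4 : c < S * Qs / (1 + ε * Qs) := by
      rw [lt_div_iff₀ (by linarith)]
      have hd : S * Qs / c * c = S * Qs := div_mul_cancel₀ _ (ne_of_gt hc)
      have h4' := mul_lt_mul_of_pos_right hεQ hc
      rw [hd] at h4'
      nlinarith [h4']
    show ε * c - S * (1 - Real.exp (-ε * Qs)) < 0
    have h5 : S * (1 - Real.exp (-ε * Qs)) ≥ S * (ε * Qs / (1 + ε * Qs)) :=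
      mul_le_mul_of_nonneg_left h3 (le_of_lt hS0)
    have h6 : S * (ε * Qs / (1 + ε * Qs)) = ε * (S * Qs / (1 + ε * Qs)) := by ring
    have h7 := mul_lt_mul_of_pos_left h4 hε
    clear_value ε c f
    linarith [h7, h5, h6]
  set M : ℝ := max (ε + 1) (S / c + 1) with hM_def
  have hεM : ε < M := lt_of_lt_of_le (by linarith) (le_max_left _ _)
  have hfM : 0 < f M := by
    have hM1 : S / c + 1 ≤ M := le_max_right _ _
    have hMc : S + c ≤ M * c := by
      have := mul_le_mul_of_nonneg_right hM1 (le_of_lt hc)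
      calc S + c = (S / c + 1) * c := by field_simp
        _ ≤ M * c := this
    have hexp : 0 < Real.exp (-M * Qs) := Real.exp_pos _
    show 0 < M * c - S * (1 - Real.exp (-M * Qs))
    nlinarith
  obtain ⟨Λ, hΛmem, hΛ⟩ := intermediate_value_Ioo (le_of_lt hεM) hcont.continuousOn
    (by constructor <;> [exact hfε; exact hfM] : (0:ℝ) ∈ Set.Ioo (f ε) (f M))
  have hΛpos : 0 < Λ := lt_trans hε hΛmem.1
  refine ⟨Λ, ⟨hΛpos, by have : f Λ = 0 := hΛ; simp only [hf_def] at this; linarith⟩, ?_⟩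
  rintro y ⟨hy, hyeq⟩
  have hfy : f y = 0 := by simp only [hf_def]; linarith
  have hfΛ : f Λ = 0 := hΛ
  rcases lt_trichotomy y Λ with h | h | h
  · exact absurd hfy (ne_of_lt (key y Λ hy h hfΛ))
  · exact h
  · exact absurd hfΛ (ne_of_lt (key Λ y hΛpos h hfy))
end

section
/- Suppose α > 0, 0 < Q* < Q_max, and S > (Q*/α)/(Q_max − Q*). Then there exists a unique Λ > 0 such that Λ·Q*/α = S·(1 − exp(−Λ·(Q_max − Q*))). -/
/-!
Put `c = Q*/α` and `d = Q_max − Q*`. The residual `F(Λ) = S(1 − e^{−Λd}) − Λc` is strictly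
concave with `F(0) = 0`, so it has at most one positive zero: a zero `a < b` would lie strictly
inside the segment `[0, b]`, forcing `F(a) > min (F 0) (F b) = 0`. Since `1 − e^{−x} ≥ x/(1 + x)`,
`F` is positive at small `Λ` exactly when `S d > c`, and `F(Λ) ≤ S − Λc` is negative for
large `Λ`, so the intermediate value theorem provides the zero.
-/

open Real Set

lemma StrictConcaveOn.eq_of_map_eq_zero {f : ℝ → ℝ} (hf : StrictConcaveOn ℝ (Ici 0) f)
    (hf0 : f 0 = 0) {a b : ℝ} (ha : 0 < a) (hb : 0 < b) (hfa : f a = 0) (hfb : f b = 0) :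
    a = b := by
  wlog hab : a < b generalizing a b
  · rcases (not_lt.1 hab).eq_or_lt with h | h
    · exact h.symm
    · exact (this hb ha hfb hfa h).symm
  have hseg : a ∈ openSegment ℝ 0 b := by rw [openSegment_eq_Ioo hb]; exact ⟨ha, hab⟩
  have := hf.lt_on_openSegment self_mem_Ici hb.le hb.ne hseg
  simp [hf0, hfb, hfa] at this

noncomputable def gainResidual (c d S Λ : ℝ) : ℝ := S * (1 - exp (-Λ * d)) - Λ * c

section gainResidual

variable {c d S : ℝ}

lemma gainResidual_zero : gainResidual c d S 0 = 0 := by simp [gainResidual]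

lemma continuous_gainResidual : Continuous (gainResidual c d S) := by
  unfold gainResidual; fun_prop

lemma strictConcaveOn_gainResidual (hS : 0 < S) (hd : d ≠ 0) :
    StrictConcaveOn ℝ univ (gainResidual c d S) := by
  refine ⟨convex_univ, fun x _ y _ hxy a b ha hb hab => ?_⟩
  have hexp := strictConvexOn_exp.2 (mem_univ (-x * d)) (mem_univ (-y * d))
    (by simpa [hd] using hxy) ha hb hab
  have hcomb : -(a * x + b * y) * d = a * (-x * d) + b * (-y * d) := by ring
  simp only [gainResidual, smul_eq_mul] at hexp ⊢
  rw [hcomb]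
  linear_combination S * hexp + S * hab

lemma gainResidual_pos_of_lt (hc : 0 < c) (hd : 0 < d) (hSd : c < S * d) :
    0 < gainResidual c d S ((S * d - c) / (2 * c) / d) := by
  -- `x = Λ d` is chosen so that `c (1 + x)` is the midpoint of `c` and `S d`.
  set x := (S * d - c) / (2 * c) with hx
  have hx0 : 0 < x := div_pos (by linarith) (by positivity)
  have hcx : 2 * c * x = S * d - c := by rw [hx]; field_simp
  have hexp : exp (-x) * (1 + x) ≤ 1 := by
    calc exp (-x) * (1 + x) ≤ exp (-x) * exp x := by
          gcongr; linarith [add_one_le_exp x]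
      _ = 1 := by rw [← exp_add, neg_add_cancel, exp_zero]
  have hzd : -(x / d) * d = -x := by field_simp
  unfold gainResidual
  rw [hzd, div_mul_eq_mul_div, sub_pos, div_lt_iff₀ hd]
  nlinarith [mul_pos hx0 hc]

lemma gainResidual_lt_zero (hS : 0 < S) (hc : 0 < c) :
    gainResidual c d S ((S + 1) / c) < 0 := by
  have hmul : (S + 1) / c * c = S + 1 := div_mul_cancel₀ _ hc.ne'
  have := exp_pos (-((S + 1) / c) * d)
  unfold gainResidual
  nlinarith

lemma gainResidual_eq_zero_iff {Λ : ℝ} :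
    gainResidual c d S Λ = 0 ↔ Λ * c = S * (1 - exp (-Λ * d)) := by
  rw [gainResidual, sub_eq_zero, eq_comm]

theorem existsUnique_pos_gainResidual_eq_zero (hc : 0 < c) (hd : 0 < d) (hSd : c < S * d) :
    ∃! Λ : ℝ, 0 < Λ ∧ gainResidual c d S Λ = 0 := by
  have hS : 0 < S := pos_of_mul_pos_left (hc.trans hSd) hd.le
  obtain ⟨Λ, hΛ, hFΛ⟩ := isPreconnected_Ioi.intermediate_value
    (mem_Ioi.2 (by positivity : (0 : ℝ) < (S + 1) / c))
    (mem_Ioi.2 (div_pos (div_pos (sub_pos.2 hSd) (by positivity)) hd))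
    continuous_gainResidual.continuousOn
    ⟨(gainResidual_lt_zero hS hc).le, (gainResidual_pos_of_lt hc hd hSd).le⟩
  have hconc := (strictConcaveOn_gainResidual (c := c) hS hd.ne').subset (subset_univ _)
    (convex_Ici 0)
  exact ⟨Λ, ⟨hΛ, hFΛ⟩, fun μ ⟨hμ, hFμ⟩ =>
    hconc.eq_of_map_eq_zero gainResidual_zero hμ hΛ hFμ hFΛ⟩

end gainResidual

/-- Existence and uniqueness of the strictly positive right gain `Λ_r` of the softened
bang–bang controller. -/
theorem stmt14
    (Qs α Qmax S : ℝ)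
    (hα : 0 < α) (hQs : 0 < Qs) (hQmax : Qs < Qmax)
    (hS : (Qs / α) / (Qmax - Qs) < S) :
    ∃! Λ : ℝ, 0 < Λ ∧
      Λ * Qs / α = S * (1 - Real.exp (-Λ * (Qmax - Qs))) := by
  have hd : 0 < Qmax - Qs := sub_pos.2 hQmax
  simp only [mul_div_assoc, ← gainResidual_eq_zero_iff]
  exact existsUnique_pos_gainResidual_eq_zero (div_pos hQs hα) hd ((div_lt_iff₀ hd).1 hS)
end

section
/- Suppose in addition that Λ_ℓ > 0, Λ_r > 0 and S > 0 satisfy Λ_ℓ·(B_max − Q*/α) = S·(1 − exp(−Λ_ℓ·Q*)) and Λ_r·Q*/α = S·(1 − exp(−Λ_r·(Q_max − Q*))). Then the piecewise feedback law u is differentiable at Q = Q* with u'(Q*) = −S, and u is continuously differentiable on [0, Q_max]. -/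
open Set

/-- Left branch of the softened bang–bang feedback law. -/
noncomputable def Bl (Qs α Bmax Λl Q : ℝ) : ℝ :=
  Qs / α + (Bmax - Qs / α) * (1 - Real.exp (Λl * (Q - Qs))) / (1 - Real.exp (-Λl * Qs))

/-- Right branch of the softened bang–bang feedback law. -/
noncomputable def Br (Qs α Qmax Λr Q : ℝ) : ℝ :=
  Qs / α - (Qs / α) * (1 - Real.exp (-Λr * (Q - Qs))) / (1 - Real.exp (-Λr * (Qmax - Qs)))

/-- The softened bang–bang feedback law. -/
noncomputable def bangbang (Qs α Bmax Qmax Λl Λr Q : ℝ) : ℝ :=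
  if Q ≤ Qs then Bl Qs α Bmax Λl Q else Br Qs α Qmax Λr Q

/-- Slope matching: the softened bang–bang law is differentiable at the set-point with
slope `−S`, and it is continuously differentiable on `[0, Q_max]`. -/
theorem stmt15
    (α μ Qmax Bmax Qs Λl Λr S : ℝ)
    (hα : 0 < α) (hμ : 0 < μ) (hQmax : 0 < Qmax) (hBmax : 0 < Bmax)
    (hQs0 : 0 < Qs) (hQs : Qs < min Qmax μ) (hQsB : Qs / α < Bmax)
    (hΛl : 0 < Λl) (hΛr : 0 < Λr) (hS : 0 < S)
    (hleft : Λl * (Bmax - Qs / α) = S * (1 - Real.exp (-Λl * Qs)))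
    (hright : Λr * Qs / α = S * (1 - Real.exp (-Λr * (Qmax - Qs)))) :
    HasDerivAt (fun Q => bangbang Qs α Bmax Qmax Λl Λr Q) (-S) Qs ∧
    ContDiffOn ℝ 1 (fun Q => bangbang Qs α Bmax Qmax Λl Λr Q) (Icc 0 Qmax) := by
  set f := fun Q => bangbang Qs α Bmax Qmax Λl Λr Q with hf
  set g := fun Q => if Q ≤ Qs then -(S * Real.exp (Λl * (Q - Qs)))
      else -(S * Real.exp (-Λr * (Q - Qs))) with hg
  have hQsQmax : Qs < Qmax := lt_of_lt_of_le hQs (min_le_left _ _)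
  have hdl : 0 < 1 - Real.exp (-Λl * Qs) := by
    have : Real.exp (-Λl * Qs) < 1 := by
      rw [Real.exp_lt_one_iff]; nlinarith
    linarith
  have hdr : 0 < 1 - Real.exp (-Λr * (Qmax - Qs)) := by
    have : Real.exp (-Λr * (Qmax - Qs)) < 1 := by
      rw [Real.exp_lt_one_iff]; nlinarith
    linarith
  -- derivative of the left branch
  have hBl : ∀ Q : ℝ, HasDerivAt (fun Q => Bl Qs α Bmax Λl Q)
      (-(S * Real.exp (Λl * (Q - Qs)))) Q := by
    intro Q
    have h1 : HasDerivAt (fun Q : ℝ => Λl * (Q - Qs)) Λl Q := by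
      simpa using ((hasDerivAt_id Q).sub_const Qs).const_mul Λl
    have h2 := h1.exp
    have h3 := ((h2.const_sub 1).const_mul (Bmax - Qs / α)).div_const
        (1 - Real.exp (-Λl * Qs))
    have h4 := h3.const_add (Qs / α)
    refine h4.congr_deriv (Eq.symm ?_)
    have hd : (1 - Real.exp (-Λl * Qs)) ≠ 0 := ne_of_gt hdl
    rw [eq_div_iff hd]
    linear_combination Real.exp (Λl * (Q - Qs)) * hleft
  -- derivative of the right branch
  have hBr : ∀ Q : ℝ, HasDerivAt (fun Q => Br Qs α Qmax Λr Q)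
      (-(S * Real.exp (-Λr * (Q - Qs)))) Q := by
    intro Q
    have h1 : HasDerivAt (fun Q : ℝ => -Λr * (Q - Qs)) (-Λr) Q := by
      simpa using ((hasDerivAt_id Q).sub_const Qs).const_mul (-Λr)
    have h2 := h1.exp
    have h3 := ((h2.const_sub 1).const_mul (Qs / α)).div_const
        (1 - Real.exp (-Λr * (Qmax - Qs)))
    have h4 := h3.const_sub (Qs / α)
    refine h4.congr_deriv (Eq.symm ?_)
    have hd : (1 - Real.exp (-Λr * (Qmax - Qs))) ≠ 0 := ne_of_gt hdr
    have hkey : Qs / α * -(Real.exp (-Λr * (Q - Qs)) * -Λr)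
        = S * (1 - Real.exp (-Λr * (Qmax - Qs))) * Real.exp (-Λr * (Q - Qs)) := by
      linear_combination Real.exp (-Λr * (Q - Qs)) * hright
    rw [hkey]
    field_simp
    rw [div_self (by rwa [← neg_mul] : (1 - Real.exp (-(Λr * (Qmax - Qs)))) ≠ 0)]
  have hBlQs : Bl Qs α Bmax Λl Qs = Qs / α := by
    simp [Bl]
  have hBrQs : Br Qs α Qmax Λr Qs = Qs / α := by
    simp [Br]
  -- the key pointwise derivative statement
  have key : ∀ Q : ℝ, HasDerivAt f (g Q) Q := by
    intro Q
    rcases lt_trichotomy Q Qs with h | h | h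
    · have heq : f =ᶠ[nhds Q] (fun Q => Bl Qs α Bmax Λl Q) := by
        filter_upwards [Iio_mem_nhds h] with x hx
        simp only [hf, bangbang, if_pos (le_of_lt (mem_Iio.mp hx))]
      have : g Q = -(S * Real.exp (Λl * (Q - Qs))) := by
        simp [hg, le_of_lt h]
      rw [this]
      exact (hBl Q).congr_of_eventuallyEq heq
    · subst h
      have hleftD : HasDerivWithinAt f (-(S * Real.exp (Λl * (Q - Q)))) (Iic Q) Q := by
        refine (hBl Q).hasDerivWithinAt.congr (fun y hy => ?_) ?_
        · simp only [hf, bangbang, if_pos (mem_Iic.mp hy)]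
        · simp [hf, bangbang]
      have hrightD : HasDerivWithinAt f (-(S * Real.exp (Λl * (Q - Q)))) (Ici Q) Q := by
        have : -(S * Real.exp (Λl * (Q - Q))) = -(S * Real.exp (-Λr * (Q - Q))) := by
          simp
        rw [this]
        refine (hBr Q).hasDerivWithinAt.congr (fun y hy => ?_) ?_
        · rcases eq_or_lt_of_le (mem_Ici.mp hy) with rfl | hlt
          · simp [hf, bangbang, hBlQs, hBrQs]
          · simp [hf, bangbang, not_le.mpr hlt]
        · simp [hf, bangbang, hBlQs, hBrQs]
      have := hleftD.union hrightD
      rw [Iic_union_Ici] at this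
      have hgQ : g Q = -(S * Real.exp (Λl * (Q - Q))) := by simp [hg]
      rw [hgQ]
      exact hasDerivWithinAt_univ.mp this
    · have heq : f =ᶠ[nhds Q] (fun Q => Br Qs α Qmax Λr Q) := by
        filter_upwards [Ioi_mem_nhds h] with x hx
        simp only [hf, bangbang, if_neg (not_le.mpr (mem_Ioi.mp hx))]
      have : g Q = -(S * Real.exp (-Λr * (Q - Qs))) := by
        simp [hg, not_le.mpr h]
      rw [this]
      exact (hBr Q).congr_of_eventuallyEq heq
  constructor
  · have := key Qs
    simpa [hg] using this
  · have hdiff : Differentiable ℝ f := fun Q => (key Q).differentiableAt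
    have hderiv : deriv f = g := funext fun Q => (key Q).deriv
    have hcg : Continuous g := by
      apply Continuous.if_le
      · continuity
      · continuity
      · exact continuous_id
      · exact continuous_const
      · intro x hx
        subst hx
        simp
    have : ContDiff ℝ 1 f := by
      rw [contDiff_one_iff_deriv]
      exact ⟨hdiff, hderiv ▸ hcg⟩
    exact this.contDiffOn
end

section
/- For all Q ∈ [0, Q_max] one has 0 ≤ u(Q) ≤ B_max; moreover u is strictly decreasing on [0, Q_max] and satisfies u(0) = B_max, u(Q*) = Q*/α, and u(Q_max) = 0. -/
open Set

lemma Bl_lt {Qs α Bmax Λl Q1 Q2 : ℝ} (hΛl : 0 < Λl) (hQs : 0 < Qs)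
    (hk : Qs / α < Bmax) (h : Q1 < Q2) : Bl Qs α Bmax Λl Q2 < Bl Qs α Bmax Λl Q1 := by
  have hD : 0 < 1 - Real.exp (-Λl * Qs) := by
    have := Real.exp_lt_one_iff.mpr (show -Λl * Qs < 0 by nlinarith)
    linarith
  have he : Real.exp (Λl * (Q1 - Qs)) < Real.exp (Λl * (Q2 - Qs)) :=
    Real.exp_lt_exp.mpr (by nlinarith)
  unfold Bl
  gcongr

lemma Bl_le {Qs α Bmax Λl Q1 Q2 : ℝ} (hΛl : 0 < Λl) (hQs : 0 < Qs)
    (hk : Qs / α < Bmax) (h : Q1 ≤ Q2) : Bl Qs α Bmax Λl Q2 ≤ Bl Qs α Bmax Λl Q1 := by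
  rcases eq_or_lt_of_le h with rfl | h
  · exact le_refl _
  · exact (Bl_lt hΛl hQs hk h).le

lemma Br_lt {Qs α Qmax Λr Q1 Q2 : ℝ} (hΛr : 0 < Λr) (hα : 0 < α) (hQs : 0 < Qs)
    (hlt : Qs < Qmax) (h : Q1 < Q2) : Br Qs α Qmax Λr Q2 < Br Qs α Qmax Λr Q1 := by
  have hD : 0 < 1 - Real.exp (-Λr * (Qmax - Qs)) := by
    have := Real.exp_lt_one_iff.mpr (show -Λr * (Qmax - Qs) < 0 by nlinarith)
    linarith
  have he : Real.exp (-Λr * (Q2 - Qs)) < Real.exp (-Λr * (Q1 - Qs)) :=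
    Real.exp_lt_exp.mpr (by nlinarith)
  have hc : 0 < Qs / α := div_pos hQs hα
  unfold Br
  gcongr

lemma Br_le {Qs α Qmax Λr Q1 Q2 : ℝ} (hΛr : 0 < Λr) (hα : 0 < α) (hQs : 0 < Qs)
    (hlt : Qs < Qmax) (h : Q1 ≤ Q2) : Br Qs α Qmax Λr Q2 ≤ Br Qs α Qmax Λr Q1 := by
  rcases eq_or_lt_of_le h with rfl | h
  · exact le_refl _
  · exact (Br_lt hΛr hα hQs hlt h).le

lemma Bl_zero {Qs α Bmax Λl : ℝ} (hΛl : 0 < Λl) (hQs : 0 < Qs) :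
    Bl Qs α Bmax Λl 0 = Bmax := by
  have hD : (1 : ℝ) - Real.exp (-(Λl * Qs)) ≠ 0 := by
    have := Real.exp_lt_one_iff.mpr (show -(Λl * Qs) < 0 by nlinarith)
    linarith
  unfold Bl
  rw [show Λl * (0 - Qs) = -(Λl * Qs) by ring, show -Λl * Qs = -(Λl * Qs) by ring]
  field_simp
  rw [mul_comm Qs Λl, mul_div_assoc, div_self hD]
  ring

lemma Bl_Qs (Qs α Bmax Λl : ℝ) : Bl Qs α Bmax Λl Qs = Qs / α := by
  simp [Bl]

lemma Br_Qs (Qs α Qmax Λr : ℝ) : Br Qs α Qmax Λr Qs = Qs / α := by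
  simp [Br]

lemma Br_Qmax {Qs α Qmax Λr : ℝ} (hΛr : 0 < Λr) (hα : 0 < α) (hlt : Qs < Qmax) :
    Br Qs α Qmax Λr Qmax = 0 := by
  have hD : (1 : ℝ) - Real.exp (-(Λr * (Qmax - Qs))) ≠ 0 := by
    have := Real.exp_lt_one_iff.mpr (show -(Λr * (Qmax - Qs)) < 0 by nlinarith)
    linarith
  unfold Br
  rw [show -Λr * (Qmax - Qs) = -(Λr * (Qmax - Qs)) by ring]
  field_simp
  ring

/-- Range, monotonicity and boundary values of the softened bang–bang law. -/
theorem stmt16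
    (α μ Qmax Bmax Qs Λl Λr : ℝ)
    (hα : 0 < α) (hμ : 0 < μ) (hQmax : 0 < Qmax) (hBmax : 0 < Bmax)
    (hQs0 : 0 < Qs) (hQs : Qs < min Qmax μ) (hQsB : Qs / α < Bmax)
    (hΛl : 0 < Λl) (hΛr : 0 < Λr) :
    (∀ Q ∈ Icc (0:ℝ) Qmax,
      0 ≤ bangbang Qs α Bmax Qmax Λl Λr Q ∧ bangbang Qs α Bmax Qmax Λl Λr Q ≤ Bmax) ∧
    StrictAntiOn (fun Q => bangbang Qs α Bmax Qmax Λl Λr Q) (Icc (0:ℝ) Qmax) ∧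
    bangbang Qs α Bmax Qmax Λl Λr 0 = Bmax ∧
    bangbang Qs α Bmax Qmax Λl Λr Qs = Qs / α ∧
    bangbang Qs α Bmax Qmax Λl Λr Qmax = 0 := by
  have hQQ : Qs < Qmax := lt_of_lt_of_le hQs (min_le_left _ _)
  have hc0 : 0 ≤ Qs / α := (div_pos hQs0 hα).le
  refine ⟨?_, ?_, ?_, ?_, ?_⟩
  · intro Q hQ
    obtain ⟨hQ0, hQm⟩ := hQ
    by_cases h : Q ≤ Qs
    · rw [bangbang, if_pos h]
      constructor
      · have := Bl_le hΛl hQs0 hQsB h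
        rw [Bl_Qs] at this; linarith
      · have := Bl_le hΛl hQs0 hQsB hQ0
        rw [Bl_zero hΛl hQs0] at this; linarith
    · rw [bangbang, if_neg h]
      push_neg at h
      constructor
      · have := Br_le hΛr hα hQs0 hQQ hQm
        rw [Br_Qmax hΛr hα hQQ] at this; linarith
      · have := Br_le hΛr hα hQs0 hQQ h.le
        rw [Br_Qs] at this; linarith
  · intro Q1 _ Q2 _ h12
    simp only
    by_cases h1 : Q1 ≤ Qs <;> by_cases h2 : Q2 ≤ Qs
    · simp only [bangbang]; rw [if_pos h1, if_pos h2]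
      exact Bl_lt hΛl hQs0 hQsB h12
    · simp only [bangbang]; rw [if_pos h1, if_neg h2]
      push_neg at h2
      have hb : Br Qs α Qmax Λr Q2 < Qs / α := by
        have := Br_lt hΛr hα hQs0 hQQ h2
        rwa [Br_Qs] at this
      have hl : Qs / α ≤ Bl Qs α Bmax Λl Q1 := by
        have := Bl_le hΛl hQs0 hQsB h1
        rwa [Bl_Qs] at this
      linarith
    · push_neg at h1; linarith
    · simp only [bangbang]; rw [if_neg h1, if_neg h2]
      exact Br_lt hΛr hα hQs0 hQQ h12
  · rw [bangbang, if_pos hQs0.le]; exact Bl_zero hΛl hQs0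
  · rw [bangbang, if_pos le_rfl]; exact Bl_Qs _ _ _ _
  · rw [bangbang, if_neg (not_le.mpr hQQ)]; exact Br_Qmax hΛr hα hQQ
end

section
/- Let Q : [0,∞) → ℝ be continuously differentiable and satisfy the closed-loop buffer equation Q'(t) = α·u(Q(t)) − min(Q(t), μ) for all t ≥ 0, with initial condition Q(0) ∈ [0, min(Q_max, μ)]. Then: (i) Q(t) ∈ [0, min(Q_max, μ)] for all t ≥ 0; (ii) the map t ↦ |Q(t) − Q*| is nonincreasing; (iii) Q(t) → Q* as t → ∞. -/
open Set Filter

/-- Asymptotic stability of the delay-free buffer dynamics under the softened bang–bang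
control law: invariance of `[0, min(Q_max, μ)]`, monotone decrease of `|Q − Q*|`, and
convergence to the set-point. -/
theorem stmt17
    (α μ Qmax Bmax Qs Λl Λr : ℝ)
    (hα : 0 < α) (hμ : 0 < μ) (hQmax : 0 < Qmax) (hBmax : 0 < Bmax)
    (hQs0 : 0 < Qs) (hQs : Qs < min Qmax μ) (hQsB : Qs / α < Bmax)
    (hΛl : 0 < Λl) (hΛr : 0 < Λr)
    (Q : ℝ → ℝ)
    (hC1 : ContDiffOn ℝ 1 Q (Ici 0))
    (hode : ∀ t : ℝ, 0 ≤ t →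
      HasDerivAt Q (α * bangbang Qs α Bmax Qmax Λl Λr (Q t) - min (Q t) μ) t)
    (h0 : Q 0 ∈ Icc (0:ℝ) (min Qmax μ)) :
    (∀ t : ℝ, 0 ≤ t → Q t ∈ Icc (0:ℝ) (min Qmax μ)) ∧
    AntitoneOn (fun t => |Q t - Qs|) (Ici 0) ∧
    Tendsto (fun t => Q t) atTop (nhds Qs) := by
  have hQsμ : Qs < μ := lt_of_lt_of_le hQs (min_le_right _ _)
  have hQsQmax : Qs < Qmax := lt_of_lt_of_le hQs (min_le_left _ _)
  have hα' : α ≠ 0 := ne_of_gt hα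
  have hdenl : 0 < 1 - Real.exp (-Λl * Qs) := by
    have : Real.exp (-Λl * Qs) < 1 := by
      rw [Real.exp_lt_one_iff]; nlinarith
    linarith
  have hdenr : 0 < 1 - Real.exp (-Λr * (Qmax - Qs)) := by
    have : Real.exp (-Λr * (Qmax - Qs)) < 1 := by
      rw [Real.exp_lt_one_iff]; nlinarith
    linarith
  -- the control pushes up below the set point
  have lemA : ∀ x, x ≤ Qs → Qs ≤ α * bangbang Qs α Bmax Qmax Λl Λr x := by
    intro x hx
    rw [bangbang, if_pos hx, Bl]
    have h1 : Real.exp (Λl * (x - Qs)) ≤ 1 := by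
      rw [Real.exp_le_one_iff]; nlinarith
    have h2 : 0 ≤ (Bmax - Qs / α) * (1 - Real.exp (Λl * (x - Qs))) / (1 - Real.exp (-Λl * Qs)) :=
      div_nonneg (mul_nonneg (by linarith) (by linarith)) hdenl.le
    have h3 : α * (Qs / α) = Qs := by field_simp
    nlinarith [mul_nonneg hα.le h2]
  have lemA0 : α * bangbang Qs α Bmax Qmax Λl Λr Qs = Qs := by
    rw [bangbang, if_pos le_rfl, Bl]
    simp [sub_self, Real.exp_zero]
    field_simp
  -- the control pushes down above the set point
  have lemB : ∀ x, Qs < x → α * bangbang Qs α Bmax Qmax Λl Λr x ≤ Qs := by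
    intro x hx
    rw [bangbang, if_neg (not_le.mpr hx), Br]
    have h1 : Real.exp (-Λr * (x - Qs)) ≤ 1 := by
      rw [Real.exp_le_one_iff]; nlinarith
    have h2 : 0 ≤ (Qs / α) * (1 - Real.exp (-Λr * (x - Qs))) / (1 - Real.exp (-Λr * (Qmax - Qs))) :=
      div_nonneg (mul_nonneg (by positivity) (by linarith)) hdenr.le
    have h3 : α * (Qs / α) = Qs := by field_simp
    nlinarith [mul_nonneg hα.le h2]
  have hcontOn : ∀ s t : ℝ, 0 ≤ s → ContinuousOn Q (Icc s t) := by
    intro s t hs r hr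
    exact ((hode r (le_trans hs hr.1)).continuousAt).continuousWithinAt
  -- forward invariance of {Q ≤ Qs}
  have inv_le : ∀ s t : ℝ, 0 ≤ s → s ≤ t → Q s ≤ Qs → Q t ≤ Qs := by
    intro s t hs hst hQs'
    by_contra hQt
    push_neg at hQt
    set S : Set ℝ := {r | r ∈ Icc s t ∧ Q r ≤ Qs} with hSdef
    have hSne : S.Nonempty := ⟨s, ⟨le_rfl, hst⟩, hQs'⟩
    have hSbdd : BddAbove S := ⟨t, fun r hr => hr.1.2⟩
    have hSclosed : IsClosed S := by
      have : S = Icc s t ∩ Q ⁻¹' (Iic Qs) := by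
        ext r; simp [hSdef, and_comm]
      rw [this]
      exact (hcontOn s t hs).preimage_isClosed_of_isClosed isClosed_Icc isClosed_Iic
    set t1 := sSup S with ht1def
    have ht1 : t1 ∈ S := hSclosed.csSup_mem hSne hSbdd
    have ht1t : t1 < t := lt_of_le_of_ne ht1.1.2 (by
      intro h
      exact absurd (h ▸ ht1.2) (not_le.mpr hQt))
    have ht10 : 0 ≤ t1 := le_trans hs ht1.1.1
    have hmid : ∀ r, t1 < r → r ≤ t → Qs < Q r := by
      intro r h1 h2
      by_contra h; push_neg at h
      have hrS : r ∈ S := ⟨⟨le_trans ht1.1.1 h1.le, h2⟩, h⟩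
      exact absurd (le_csSup hSbdd hrS) (not_le.mpr h1)
    have hanti : AntitoneOn Q (Icc t1 t) := by
      apply antitoneOn_of_deriv_nonpos (convex_Icc _ _) (hcontOn t1 t ht10)
      · intro r hr
        rw [interior_Icc] at hr
        exact ((hode r (le_trans ht10 hr.1.le)).differentiableAt).differentiableWithinAt
      · intro r hr
        rw [interior_Icc] at hr
        rw [(hode r (le_trans ht10 hr.1.le)).deriv]
        have h1 := lemB (Q r) (hmid r hr.1 hr.2.le)
        have h2 : Qs ≤ min (Q r) μ := le_min (hmid r hr.1 hr.2.le).le hQsμ.le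
        linarith
    have := hanti (left_mem_Icc.mpr ht1t.le) (right_mem_Icc.mpr ht1t.le) ht1t.le
    linarith [ht1.2]
  -- forward invariance of {Qs ≤ Q}
  have inv_ge : ∀ s t : ℝ, 0 ≤ s → s ≤ t → Qs ≤ Q s → Qs ≤ Q t := by
    intro s t hs hst hQs'
    by_contra hQt
    push_neg at hQt
    set S : Set ℝ := {r | r ∈ Icc s t ∧ Qs ≤ Q r} with hSdef
    have hSne : S.Nonempty := ⟨s, ⟨le_rfl, hst⟩, hQs'⟩
    have hSbdd : BddAbove S := ⟨t, fun r hr => hr.1.2⟩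
    have hSclosed : IsClosed S := by
      have : S = Icc s t ∩ Q ⁻¹' (Ici Qs) := by
        ext r; simp [hSdef, and_comm]
      rw [this]
      exact (hcontOn s t hs).preimage_isClosed_of_isClosed isClosed_Icc isClosed_Ici
    set t1 := sSup S with ht1def
    have ht1 : t1 ∈ S := hSclosed.csSup_mem hSne hSbdd
    have ht1t : t1 < t := lt_of_le_of_ne ht1.1.2 (by
      intro h
      exact absurd (h ▸ ht1.2) (not_le.mpr hQt))
    have ht10 : 0 ≤ t1 := le_trans hs ht1.1.1
    have hmid : ∀ r, t1 < r → r ≤ t → Q r < Qs := by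
      intro r h1 h2
      by_contra h; push_neg at h
      have hrS : r ∈ S := ⟨⟨le_trans ht1.1.1 h1.le, h2⟩, h⟩
      exact absurd (le_csSup hSbdd hrS) (not_le.mpr h1)
    have hmono : MonotoneOn Q (Icc t1 t) := by
      apply monotoneOn_of_deriv_nonneg (convex_Icc _ _) (hcontOn t1 t ht10)
      · intro r hr
        rw [interior_Icc] at hr
        exact ((hode r (le_trans ht10 hr.1.le)).differentiableAt).differentiableWithinAt
      · intro r hr
        rw [interior_Icc] at hr
        rw [(hode r (le_trans ht10 hr.1.le)).deriv]
        have hQr := hmid r hr.1 hr.2.le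
        have h1 := lemA (Q r) hQr.le
        have h2 : min (Q r) μ = Q r := min_eq_left (by linarith)
        rw [h2]; linarith
    have := hmono (left_mem_Icc.mpr ht1t.le) (right_mem_Icc.mpr ht1t.le) ht1t.le
    linarith [ht1.2]
  rcases le_or_gt (Q 0) Qs with hle | hgt
  · -- starting below (or at) the set point
    have hub : ∀ t : ℝ, 0 ≤ t → Q t ≤ Qs := fun t ht => inv_le 0 t le_rfl ht hle
    have hmono : MonotoneOn Q (Ici 0) := by
      apply monotoneOn_of_deriv_nonneg (convex_Ici 0) (hC1.continuousOn)
      · intro r hr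
        rw [interior_Ici] at hr
        exact ((hode r hr.le).differentiableAt).differentiableWithinAt
      · intro r hr
        rw [interior_Ici] at hr
        rw [(hode r hr.le).deriv]
        have h1 := lemA (Q r) (hub r hr.le)
        have h2 : min (Q r) μ = Q r := min_eq_left (by linarith [hub r hr.le])
        have h3 := hub r hr.le
        rw [h2]; linarith
    refine ⟨?_, ?_, ?_⟩
    · intro t ht
      exact ⟨le_trans h0.1 (hmono self_mem_Ici ht ht), le_trans (hub t ht) hQs.le⟩
    · intro s hs t ht hst
      have h1 : Q s ≤ Q t := hmono hs ht hst
      have h2 := hub s hs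
      have h3 := hub t ht
      simp only [abs_of_nonpos (by linarith : Q s - Qs ≤ 0),
        abs_of_nonpos (by linarith : Q t - Qs ≤ 0)]
      linarith
    · rw [Metric.tendsto_atTop]
      intro ε hε
      have key : ∃ t0 : ℝ, 0 ≤ t0 ∧ Qs - Q t0 < ε := by
        by_contra h
        push_neg at h
        -- Q'(t) ≥ ε always, so Q grows without bound: contradiction
        have hg : MonotoneOn (fun t => Q t - ε * t) (Ici 0) := by
          apply monotoneOn_of_deriv_nonneg (convex_Ici 0)
          · exact (hC1.continuousOn).sub (continuous_const.mul continuous_id).continuousOn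
          · intro r hr
            rw [interior_Ici] at hr
            exact (((hode r hr.le).sub ((hasDerivAt_id r).const_mul ε)).differentiableAt).differentiableWithinAt
          · intro r hr
            rw [interior_Ici] at hr
            have hd : HasDerivAt (fun t => Q t - ε * t)
                ((α * bangbang Qs α Bmax Qmax Λl Λr (Q r) - min (Q r) μ) - ε * 1) r :=
              (hode r hr.le).sub ((hasDerivAt_id r).const_mul ε)
            rw [hd.deriv]
            have h1 := lemA (Q r) (hub r hr.le)
            have h2 : min (Q r) μ = Q r := min_eq_left (by linarith [hub r hr.le])
            have h3 := h r hr.le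
            rw [h2]; linarith
        have hT0 : (0:ℝ) ≤ (Qs - Q 0) / ε + 1 := by
          have : 0 ≤ (Qs - Q 0) / ε := div_nonneg (by linarith) hε.le
          linarith
        have hmg : Q 0 - ε * 0 ≤ Q ((Qs - Q 0) / ε + 1) - ε * ((Qs - Q 0) / ε + 1) :=
          hg self_mem_Ici (mem_Ici.mpr hT0) hT0
        have hdiv : ε * ((Qs - Q 0) / ε + 1) = Qs - Q 0 + ε := by
          field_simp
        have hQT := hub _ hT0
        linarith
      obtain ⟨t0, ht0, hlt⟩ := key
      refine ⟨t0, fun t ht => ?_⟩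
      have ht' : 0 ≤ t := le_trans ht0 ht
      have h1 : Q t0 ≤ Q t := hmono (mem_Ici.mpr ht0) (mem_Ici.mpr ht') ht
      have h2 := hub t ht'
      rw [Real.dist_eq, abs_of_nonpos (by linarith)]
      linarith
  · -- starting above the set point
    have hlb : ∀ t : ℝ, 0 ≤ t → Qs ≤ Q t := fun t ht => inv_ge 0 t le_rfl ht hgt.le
    have hderiv_np : ∀ r : ℝ, 0 ≤ r →
        α * bangbang Qs α Bmax Qmax Λl Λr (Q r) - min (Q r) μ ≤ 0 := by
      intro r hr
      rcases eq_or_lt_of_le (hlb r hr) with heq | hlt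
      · rw [← heq, lemA0, min_eq_left hQsμ.le]
        linarith
      · have h1 := lemB (Q r) hlt
        have h2 : Qs ≤ min (Q r) μ := le_min hlt.le hQsμ.le
        linarith
    have hanti : AntitoneOn Q (Ici 0) := by
      apply antitoneOn_of_deriv_nonpos (convex_Ici 0) (hC1.continuousOn)
      · intro r hr
        rw [interior_Ici] at hr
        exact ((hode r hr.le).differentiableAt).differentiableWithinAt
      · intro r hr
        rw [interior_Ici] at hr
        rw [(hode r hr.le).deriv]
        exact hderiv_np r hr.le
    refine ⟨?_, ?_, ?_⟩
    · intro t ht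
      exact ⟨le_trans hQs0.le (hlb t ht), le_trans (hanti self_mem_Ici ht ht) h0.2⟩
    · intro s hs t ht hst
      have h1 : Q t ≤ Q s := hanti hs ht hst
      have h2 := hlb s hs
      have h3 := hlb t ht
      simp only [abs_of_nonneg (by linarith : (0:ℝ) ≤ Q s - Qs),
        abs_of_nonneg (by linarith : (0:ℝ) ≤ Q t - Qs)]
      linarith
    · rw [Metric.tendsto_atTop]
      intro ε hε
      set c : ℝ := min ε (μ - Qs) with hc
      have hc0 : 0 < c := lt_min hε (by linarith)
      have key : ∃ t0 : ℝ, 0 ≤ t0 ∧ Q t0 - Qs < ε := by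
        by_contra h
        push_neg at h
        have hg : AntitoneOn (fun t => Q t + c * t) (Ici 0) := by
          apply antitoneOn_of_deriv_nonpos (convex_Ici 0)
          · exact (hC1.continuousOn).add (continuous_const.mul continuous_id).continuousOn
          · intro r hr
            rw [interior_Ici] at hr
            exact (((hode r hr.le).add ((hasDerivAt_id r).const_mul c)).differentiableAt).differentiableWithinAt
          · intro r hr
            rw [interior_Ici] at hr
            have hd : HasDerivAt (fun t => Q t + c * t)
                ((α * bangbang Qs α Bmax Qmax Λl Λr (Q r) - min (Q r) μ) + c * 1) r :=
              (hode r hr.le).add ((hasDerivAt_id r).const_mul c)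
            rw [hd.deriv]
            have h3 := h r hr.le
            have h1 := lemB (Q r) (by linarith : Qs < Q r)
            have h2 : Qs + c ≤ min (Q r) μ := by
              apply le_min
              · have := min_le_left ε (μ - Qs); linarith
              · have := min_le_right ε (μ - Qs); linarith
            linarith
        have hQ0 : Qs ≤ Q 0 := hgt.le
        have hT0 : (0:ℝ) ≤ (Q 0 - Qs) / c + 1 := by
          have : 0 ≤ (Q 0 - Qs) / c := div_nonneg (by linarith) hc0.le
          linarith
        have hmg : Q ((Q 0 - Qs) / c + 1) + c * ((Q 0 - Qs) / c + 1) ≤ Q 0 + c * 0 :=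
          hg self_mem_Ici (mem_Ici.mpr hT0) hT0
        have hdiv : c * ((Q 0 - Qs) / c + 1) = Q 0 - Qs + c := by
          field_simp
        have hQT := hlb _ hT0
        linarith
      obtain ⟨t0, ht0, hlt⟩ := key
      refine ⟨t0, fun t ht => ?_⟩
      have ht' : 0 ≤ t := le_trans ht0 ht
      have h1 : Q t ≤ Q t0 := hanti (mem_Ici.mpr ht0) (mem_Ici.mpr ht') ht
      have h2 := hlb t ht'
      rw [Real.dist_eq, abs_of_nonneg (by linarith)]
      linarith
end
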